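/- arXiv:2104.07902 — 11 statements merged into one kernel-verified Lean document; each statement's English description precedes it below -/
import Mathlib

section
/- Suppose A and B are symmetric Latin squares of order n that are paratopic. Then A and B are isotopic. Moreover, if A and B are not rrs-isotopic, then n is even and each of A and B possesses an autotopism of the form (θ, θ⁻¹, ε) in which θ is a permutation of {1,…,n} of prime order p that has no fixed points and all of whose cycles have length p. -/
/-- A Latin square of order `n`: each row and each column is a bijection. -/
def IsLatin {n : ℕ} (L : Fin n → Fin n → Fin n) : Prop :=
  (∀ i, Function.Bijective (L i)) ∧ (∀ j, Function.Bijective fun i => L i j)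

/-- `L` is symmetric: `L(i,j) = L(j,i)`. -/
def IsSymmetric {n : ℕ} (L : Fin n → Fin n → Fin n) : Prop :=
  ∀ i j, L i j = L j i

/-- `L` is semisymmetric: `L(i,j) = k → L(j,k) = i`. -/
def IsSemisymmetric {n : ℕ} (L : Fin n → Fin n → Fin n) : Prop :=
  ∀ i j, L j (L i j) = i

/-- Totally symmetric: symmetric and semisymmetric. -/
def IsTotallySymmetric {n : ℕ} (L : Fin n → Fin n → Fin n) : Prop :=
  IsSymmetric L ∧ IsSemisymmetric L

/-- Reduced: the first row and first column are in natural order. -/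
def IsReducedLS {n : ℕ} (L : Fin n → Fin n → Fin n) : Prop :=
  ∀ i j : Fin n, ((i : ℕ) = 0 → L i j = j) ∧ ((j : ℕ) = 0 → L i j = i)

/-- Idempotent: `L(i,i) = i` for all `i`. -/
def IsIdempotent {n : ℕ} (L : Fin n → Fin n → Fin n) : Prop :=
  ∀ i, L i i = i

/-- Unipotent: all diagonal entries are equal. -/
def IsUnipotent {n : ℕ} (L : Fin n → Fin n → Fin n) : Prop :=
  ∀ i j, L i i = L j j

/-- `B` is isotopic to `A`: `B = A(α,β,γ)`. -/
def Isotopic {n : ℕ} (A B : Fin n → Fin n → Fin n) : Prop :=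
  ∃ α β γ : Equiv.Perm (Fin n), ∀ i j, B (α i) (β j) = γ (A i j)

/-- `B` is rrs-isotopic to `A`: `B = A(α,α,γ)`. -/
def RrsIsotopic {n : ℕ} (A B : Fin n → Fin n → Fin n) : Prop :=
  ∃ α γ : Equiv.Perm (Fin n), ∀ i j, B (α i) (α j) = γ (A i j)

/-- `B` is isomorphic to `A`: `B = A(α,α,α)`. -/
def Isomorphic {n : ℕ} (A B : Fin n → Fin n → Fin n) : Prop :=
  ∃ α : Equiv.Perm (Fin n), ∀ i j, B (α i) (α j) = α (A i j)

/-- `B` is one of the six conjugates of `A`, obtained by uniformly permuting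
the coordinates of the triples `(i, j, A i j)`. -/
def IsConjugate {n : ℕ} (A B : Fin n → Fin n → Fin n) : Prop :=
  (∀ i j, B i j = A i j) ∨ (∀ i j, B j i = A i j) ∨
  (∀ i j, B (A i j) j = i) ∨ (∀ i j, B i (A i j) = j) ∨
  (∀ i j, B j (A i j) = i) ∨ (∀ i j, B (A i j) i = j)

/-- `B` is paratopic to `A`: `B` is isotopic to some conjugate of `A`. -/
def Paratopic {n : ℕ} (A B : Fin n → Fin n → Fin n) : Prop :=
  ∃ C : Fin n → Fin n → Fin n, IsConjugate A C ∧ Isotopic C B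

/-- `L` possesses an autotopism `(θ, θ⁻¹, ε)` where `θ` is a fixed-point-free
permutation of prime order `p` all of whose cycles have length `p`. -/
def HasSemiregularPrincipalAutotopism {n : ℕ} (L : Fin n → Fin n → Fin n) : Prop :=
  ∃ θ : Equiv.Perm (Fin n), ∃ p : ℕ, p.Prime ∧ orderOf θ = p ∧
    (∀ x, θ x ≠ x) ∧ (∀ x, (θ.cycleOf x).support.card = p) ∧
    (∀ i j, L (θ i) (θ⁻¹ j) = L i j)

/-!
Every conjugate of a symmetric Latin square `A` is, up to transposition, either `A` itself
or its right division square `D`, given by `D (A i j) j = i`. When `B` is symmetric, an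
isotopism `(α, β, γ)` from `D` to `B` yields the rrs-isotopism `(β, β, γ β⁻¹ α)` from `A`
to `B`, so paratopy implies isotopy.

If `(α, β, γ)` is an isotopism between the symmetric squares `A` and `B`, then `σ = α⁻¹ β`
gives an autotopism `(σ, σ⁻¹, ε)` of `A`. If `σ` has odd order, it has a square root `τ`
among its powers, and `(α τ, α τ, γ)` is an rrs-isotopism. Otherwise the involution `φ`
among the powers of `σ` gives an autotopism `(φ, φ⁻¹, ε)`; a fixed point of `φ` would make
`φ` trivial on a row, so `φ` is fixed-point-free and `n` is even. The inverse isotopism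
treats `B` in the same way.
-/

namespace Equiv.Perm

variable {α : Type*} [Fintype α] [DecidableEq α] {σ : Perm α}

theorem card_support_cycleOf_eq_orderOf (hσ : (orderOf σ).Prime) {x : α} (hx : σ x ≠ x) :
    (σ.cycleOf x).support.card = orderOf σ := by
  have hcyc : (σ.cycleOf x).IsCycle := σ.isCycle_cycleOf_iff.mpr hx
  rw [← hcyc.orderOf]
  refine (hσ.eq_one_or_self_of_dvd _ (σ.orderOf_cycleOf_dvd_orderOf x)).resolve_left ?_
  rw [orderOf_eq_one_iff]
  exact hcyc.ne_one

theorem orderOf_dvd_card_of_forall_ne (hσ : (orderOf σ).Prime) (hfree : ∀ x, σ x ≠ x) :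
    orderOf σ ∣ Fintype.card α := by
  have := Fact.mk hσ
  have hmod := card_compl_support_modEq (σ := σ) (n := 1) (by rw [pow_one, pow_orderOf_eq_one])
  have hsupp : σ.support = Finset.univ :=
    Finset.eq_univ_of_forall fun x => mem_support.mpr (hfree x)
  rw [hsupp, Finset.compl_univ, Finset.card_empty] at hmod
  exact Nat.modEq_zero_iff_dvd.mp hmod.symm

end Equiv.Perm

section LatinSquare

variable {n : ℕ} {A B L : Fin n → Fin n → Fin n}

theorem IsSymmetric.swap_eq (h : IsSymmetric L) : Function.swap L = L :=
  funext₂ fun i j => h j i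

theorem Isotopic.swap (h : Isotopic A B) : Isotopic (Function.swap A) (Function.swap B) :=
  let ⟨α, β, γ, h⟩ := h
  ⟨β, α, γ, fun i j => h j i⟩

theorem Isotopic.symm (h : Isotopic A B) : Isotopic B A := by
  obtain ⟨α, β, γ, h⟩ := h
  refine ⟨α⁻¹, β⁻¹, γ⁻¹, fun i j => ?_⟩
  rw [Equiv.Perm.eq_inv_iff_eq, ← h]
  simp

theorem RrsIsotopic.symm (h : RrsIsotopic A B) : RrsIsotopic B A := by
  obtain ⟨α, γ, h⟩ := h
  refine ⟨α⁻¹, γ⁻¹, fun i j => ?_⟩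
  rw [Equiv.Perm.eq_inv_iff_eq, ← h]
  simp

theorem RrsIsotopic.isotopic (h : RrsIsotopic A B) : Isotopic A B :=
  let ⟨α, γ, h⟩ := h
  ⟨α, α, γ, h⟩

theorem IsConjugate.exists_eq_or_rightDiv {C : Fin n → Fin n → Fin n} (hAs : IsSymmetric A)
    (hC : IsConjugate A C) :
    ∃ D, (D = C ∨ D = Function.swap C) ∧ (D = A ∨ ∀ i j, D (A i j) j = i) := by
  rcases hC with h | h | h | h | h | h
  · exact ⟨C, .inl rfl, .inl (funext₂ h)⟩
  · exact ⟨Function.swap C, .inr rfl, .inl (funext₂ h)⟩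
  · exact ⟨C, .inl rfl, .inr h⟩
  · exact ⟨Function.swap C, .inr rfl, .inr fun i j => by simp only [Function.swap, hAs i j, h]⟩
  · exact ⟨Function.swap C, .inr rfl, .inr h⟩
  · exact ⟨C, .inl rfl, .inr fun i j => by rw [hAs i j, h]⟩

theorem rrsIsotopic_of_isotopic_rightDiv {D : Fin n → Fin n → Fin n} (hB : IsLatin B)
    (hAs : IsSymmetric A) (hBs : IsSymmetric B) (hD : ∀ i j, D (A i j) j = i)
    (hDB : Isotopic D B) : RrsIsotopic A B := by
  obtain ⟨α, β, γ, hI⟩ := hDB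
  have H : ∀ i j, B (α (A i j)) (β j) = γ i := fun i j => by rw [hI, hD]
  refine ⟨β, γ * β⁻¹ * α, fun i j => ?_⟩
  set m := β⁻¹ (α (A i j))
  have hβm : β m = α (A i j) := β.apply_symm_apply _
  have hjm : α (A j m) = β i := by
    refine (hB.2 (β m)).injective ?_
    show B (α (A j m)) (β m) = B (β i) (β m)
    rw [H, hBs, hβm, hAs i j, H]
  calc B (β i) (β j) = B (α (A m j)) (β j) := by rw [hAs m j, hjm]
    _ = γ m := H m j

theorem isotopic_of_paratopic (hB : IsLatin B) (hAs : IsSymmetric A) (hBs : IsSymmetric B)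
    (hpar : Paratopic A B) : Isotopic A B := by
  obtain ⟨C, hC, hCB⟩ := hpar
  obtain ⟨D, hDC, hD⟩ := hC.exists_eq_or_rightDiv hAs
  have hDB : Isotopic D B := by
    rcases hDC with rfl | rfl
    · exact hCB
    · simpa only [hBs.swap_eq] using hCB.swap
  rcases hD with rfl | hD
  · exact hDB
  · exact (rrsIsotopic_of_isotopic_rightDiv hB hAs hBs hD hDB).isotopic

-- `(θ, θ⁻¹, ε)` is an autotopism of `L`.
def IsInvAutotopism (L : Fin n → Fin n → Fin n) (θ : Equiv.Perm (Fin n)) : Prop :=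
  ∀ i j, L (θ i) (θ⁻¹ j) = L i j

namespace IsInvAutotopism

variable {θ : Equiv.Perm (Fin n)}

theorem pow (h : IsInvAutotopism L θ) : ∀ k : ℕ, IsInvAutotopism L (θ ^ k)
  | 0 => fun i j => rfl
  | k + 1 => fun i j => by
    have h₁ : (θ ^ (k + 1)) i = (θ ^ k) (θ i) := by rw [pow_succ]; rfl
    have h₂ : (θ ^ (k + 1))⁻¹ j = (θ ^ k)⁻¹ (θ⁻¹ j) := by
      rw [pow_succ', mul_inv_rev]; rfl
    rw [h₁, h₂, h.pow k, h]

theorem apply_ne (hL : IsLatin L) (h : IsInvAutotopism L θ) (hθ : θ ≠ 1) (x : Fin n) :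
    θ x ≠ x := by
  intro hx
  refine hθ (inv_eq_one.mp (Equiv.ext fun j => (hL.1 x).injective ?_))
  have hrow := h x j
  rw [hx] at hrow
  exact hrow

theorem hasSemiregularPrincipalAutotopism (hL : IsLatin L) (h : IsInvAutotopism L θ)
    (hp : (orderOf θ).Prime) : HasSemiregularPrincipalAutotopism L := by
  have hfree := h.apply_ne hL fun h1 => hp.ne_one (orderOf_eq_one_iff.mpr h1)
  exact ⟨θ, orderOf θ, hp, rfl, hfree,
    fun x => Equiv.Perm.card_support_cycleOf_eq_orderOf hp (hfree x), h⟩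

end IsInvAutotopism

theorem isInvAutotopism_of_isotopism (hAs : IsSymmetric A) (hBs : IsSymmetric B)
    {α β γ : Equiv.Perm (Fin n)} (hI : ∀ i j, B (α i) (β j) = γ (A i j)) :
    IsInvAutotopism A (α⁻¹ * β) := by
  intro i j
  apply γ.injective
  rw [← hI, hAs i j, ← hI, hBs (α j)]
  simp

theorem rrsIsotopic_of_isotopism_of_sq {α β γ τ : Equiv.Perm (Fin n)}
    (hI : ∀ i j, B (α i) (β j) = γ (A i j)) (hτ : IsInvAutotopism A τ)
    (hsq : τ ^ 2 = α⁻¹ * β) : RrsIsotopic A B := by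
  have hβ : β = α * τ * τ := by rw [mul_assoc, ← sq, hsq, mul_inv_cancel_left]
  refine ⟨α * τ, γ, fun i j => ?_⟩
  have hj : (α * τ) j = β (τ⁻¹ j) := by rw [hβ]; simp [Equiv.Perm.mul_apply]
  rw [hj, Equiv.Perm.mul_apply, hI, hτ]

theorem even_and_hasSemiregularPrincipalAutotopism_of_not_rrsIsotopic (hA : IsLatin A)
    (hAs : IsSymmetric A) (hBs : IsSymmetric B) (hiso : Isotopic A B)
    (hnr : ¬ RrsIsotopic A B) : Even n ∧ HasSemiregularPrincipalAutotopism A := by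
  obtain ⟨α, β, γ, hI⟩ := hiso
  have hσ := isInvAutotopism_of_isotopism hAs hBs hI
  set σ := α⁻¹ * β
  obtain heven | hodd := Nat.even_or_odd (orderOf σ)
  · set φ := σ ^ (orderOf σ / 2)
    have hφ : orderOf φ = 2 := orderOf_pow_orderOf_div (orderOf_pos σ).ne' heven.two_dvd
    have hp : (orderOf φ).Prime := hφ ▸ Nat.prime_two
    have hfree := (hσ.pow _).apply_ne hA fun h1 => hp.ne_one (orderOf_eq_one_iff.mpr h1)
    have hdvd := Equiv.Perm.orderOf_dvd_card_of_forall_ne hp hfree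
    rw [hφ, Fintype.card_fin] at hdvd
    exact ⟨even_iff_two_dvd.mpr hdvd, (hσ.pow _).hasSemiregularPrincipalAutotopism hA hp⟩
  · obtain ⟨m, hm⟩ := exists_pow_eq_self_of_coprime (Nat.coprime_two_left.mpr hodd)
    have hsq : (σ ^ m) ^ 2 = σ := by rw [← pow_mul, mul_comm, pow_mul, hm]
    exact absurd (rrsIsotopic_of_isotopism_of_sq hI (hσ.pow m) hsq) hnr

end LatinSquare

theorem stmt5 {n : ℕ} (A B : Fin n → Fin n → Fin n)
    (hA : IsLatin A) (hAs : IsSymmetric A)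
    (hB : IsLatin B) (hBs : IsSymmetric B)
    (hpar : Paratopic A B) :
    Isotopic A B ∧ (¬ RrsIsotopic A B → Even n ∧
      HasSemiregularPrincipalAutotopism A ∧ HasSemiregularPrincipalAutotopism B) := by
  have hiso := isotopic_of_paratopic hB hAs hBs hpar
  refine ⟨hiso, fun hnr => ?_⟩
  obtain ⟨hn, hAaut⟩ :=
    even_and_hasSemiregularPrincipalAutotopism_of_not_rrsIsotopic hA hAs hBs hiso hnr
  obtain ⟨-, hBaut⟩ := even_and_hasSemiregularPrincipalAutotopism_of_not_rrsIsotopic hB hBs hAs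
    hiso.symm (mt RrsIsotopic.symm hnr)
  exact ⟨hn, hAaut, hBaut⟩
end

section
/- Let L be a symmetric Latin square of order n, and let Γ be its rrs-autotopism group. Then the number of isomorphism classes of symmetric Latin squares rrs-isotopic to L equals (1/|Γ|) · Σ_{(α,α,β)∈Γ} ψ(α,β), where ψ(α,β) = |{σ ∈ S_n : σ⁻¹ασ = β}| (equivalently, ψ(α,β) = ∏_{i=1}^{k} (n_i)! · c_i^{n_i} when α and β have the same cycle structure c₁^{n₁}⋯c_k^{n_k}, and ψ(α,β) = 0 when α and β are not conjugate in S_n). -/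
/-- The rrs-autotopism group of `L`, recorded as the set of pairs `(α, β)` such
that `(α, α, β)` is an autotopism of `L`. -/
def RrsAutotopisms {n : ℕ} (L : Fin n → Fin n → Fin n) :
    Set (Equiv.Perm (Fin n) × Equiv.Perm (Fin n)) :=
  {p | ∀ i j, L (p.1 i) (p.1 j) = p.2 (L i j)}

/-- `ψ(α,β)`: the number of `σ ∈ S_n` with `σ⁻¹ασ = β`. -/
noncomputable def psi {n : ℕ} (α β : Equiv.Perm (Fin n)) : ℕ :=
  Nat.card {σ : Equiv.Perm (Fin n) // σ⁻¹ * α * σ = β}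

/-!
Up to isomorphism every rrs-isotope `L(α,α,γ)` of `L` is `L(1,1,α⁻¹γ)`, and `L(1,1,σ)` is isomorphic
to `L(1,1,τ)` exactly when `τ` lies in the orbit of `σ` under the action `(α,β) • τ = ατβ⁻¹` of `Γ`
on `S_n`. So the isomorphism classes are the orbits of this action. The permutations fixed by
`(α,β)` are the `τ` with `τ⁻¹ατ = β`, of which there are `ψ(α,β)`, and Burnside's lemma counts
the orbits.
-/

open MulAction

abbrev mulActionProdLeftRight (G : Type*) [Group G] : MulAction (G × G) G where
  smul p τ := p.1 * τ * p.2⁻¹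
  one_smul τ := by simp [HSMul.hSMul]
  mul_smul p q τ := by simp [HSMul.hSMul, SMul.smul, mul_assoc]

attribute [local instance] mulActionProdLeftRight

lemma prod_smul_def {G : Type*} [Group G] (p : G × G) (τ : G) : p • τ = p.1 * τ * p.2⁻¹ := rfl

lemma mem_fixedBy_prod_iff {G : Type*} [Group G] (p : G × G) (τ : G) :
    τ ∈ fixedBy G p ↔ τ⁻¹ * p.1 * τ = p.2 := by
  rw [mem_fixedBy, prod_smul_def, mul_inv_eq_iff_eq_mul, ← inv_mul_eq_iff_eq_mul, mul_assoc]

lemma MulAction.finsum_natCard_fixedBy_eq_natCard_orbits_mul_natCard (G X : Type*) [Group G]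
    [MulAction G X] [Finite G] [Finite X] :
    ∑ᶠ g : G, Nat.card (fixedBy X g) = Nat.card (orbitRel.Quotient G X) * Nat.card G := by
  classical
  have := Fintype.ofFinite G
  have := Fintype.ofFinite X
  simp only [finsum_eq_sum_of_fintype, Nat.card_eq_fintype_card]
  exact sum_card_fixedBy_eq_card_orbits_mul_card_group G X

section LatinSquare

variable {n : ℕ}

def rrsAutotopismSubgroup (L : Fin n → Fin n → Fin n) :
    Subgroup (Equiv.Perm (Fin n) × Equiv.Perm (Fin n)) where
  carrier := RrsAutotopisms L
  one_mem' _ _ := rfl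
  mul_mem' {p q} hp hq i j := by simp [hp _ _, hq i j]
  inv_mem' {p} hp i j := by
    simpa using congrArg (p.2⁻¹ : Equiv.Perm (Fin n)) (hp (p.1⁻¹ i) (p.1⁻¹ j)).symm

lemma card_fixedBy_rrsAutotopismSubgroup (L : Fin n → Fin n → Fin n)
    (p : rrsAutotopismSubgroup L) :
    Nat.card (fixedBy (Equiv.Perm (Fin n)) p) = psi p.1.1 p.1.2 :=
  Nat.card_congr (Equiv.subtypeEquivRight fun τ => mem_fixedBy_prod_iff p.1 τ)

lemma isomorphic_equivalence : Equivalence (@Isomorphic n) where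
  refl _ := ⟨1, fun _ _ => rfl⟩
  symm := by
    rintro A B ⟨σ, hσ⟩
    refine ⟨σ⁻¹, fun i j => ?_⟩
    simpa using congrArg (σ⁻¹ : Equiv.Perm (Fin n)) (hσ (σ⁻¹ i) (σ⁻¹ j)).symm
  trans := by
    rintro A B C ⟨σ, hσ⟩ ⟨ρ, hρ⟩
    exact ⟨ρ * σ, fun i j => by simp [hρ, hσ]⟩

lemma IsLatin.comp_left {L : Fin n → Fin n → Fin n} (hL : IsLatin L) (τ : Equiv.Perm (Fin n)) :
    IsLatin fun i j => τ (L i j) :=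
  ⟨fun i => τ.bijective.comp (hL.1 i), fun j => τ.bijective.comp (hL.2 j)⟩

lemma IsSymmetric.comp_left {L : Fin n → Fin n → Fin n} (hs : IsSymmetric L)
    (τ : Equiv.Perm (Fin n)) : IsSymmetric fun i j => τ (L i j) :=
  fun i j => congrArg τ (hs i j)

lemma rrsIsotopic_comp_left (L : Fin n → Fin n → Fin n) (τ : Equiv.Perm (Fin n)) :
    RrsIsotopic L fun i j => τ (L i j) :=
  ⟨1, τ, fun _ _ => rfl⟩

/-- Every rrs-isotope `L(α,α,γ)` is isomorphic, via `α⁻¹`, to `L(1,1,α⁻¹γ)`. -/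
lemma RrsIsotopic.exists_isomorphic_comp_left {L M : Fin n → Fin n → Fin n}
    (h : RrsIsotopic L M) : ∃ τ : Equiv.Perm (Fin n), Isomorphic (fun i j => τ (L i j)) M := by
  obtain ⟨α, γ, hM⟩ := h
  exact ⟨α⁻¹ * γ, α, fun i j => by simp [hM]⟩

/-- `L(1,1,σ)` and `L(1,1,τ)` are isomorphic via `a` exactly when `(a, τ⁻¹aσ)` is an
rrs-autotopism of `L`, which moves `σ` to `τ`. -/
lemma isomorphic_comp_left_iff (L : Fin n → Fin n → Fin n) (σ τ : Equiv.Perm (Fin n)) :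
    Isomorphic (fun i j => σ (L i j)) (fun i j => τ (L i j)) ↔
      τ ∈ orbit (rrsAutotopismSubgroup L) σ := by
  constructor
  · rintro ⟨a, ha⟩
    refine ⟨⟨(a, τ⁻¹ * a * σ), fun i j => ?_⟩, ?_⟩
    · simpa [Equiv.eq_symm_apply] using ha i j
    · simp [Subgroup.smul_def, prod_smul_def]
  · rintro ⟨⟨⟨a, b⟩, hab⟩, rfl⟩
    refine ⟨a, fun i j => ?_⟩
    simp [Subgroup.smul_def, prod_smul_def, hab i j]

lemma natCard_isomorphismClasses_eq_natCard_orbits {L : Fin n → Fin n → Fin n}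
    (hL : IsLatin L) (hs : IsSymmetric L) :
    Nat.card (Quot (fun A B : {M : Fin n → Fin n → Fin n //
        IsLatin M ∧ IsSymmetric M ∧ RrsIsotopic L M} => Isomorphic A.1 B.1)) =
      Nat.card (orbitRel.Quotient (rrsAutotopismSubgroup L) (Equiv.Perm (Fin n))) := by
  let f (τ : Equiv.Perm (Fin n)) : Quot (fun A B : {M : Fin n → Fin n → Fin n //
      IsLatin M ∧ IsSymmetric M ∧ RrsIsotopic L M} => Isomorphic A.1 B.1) :=
    Quot.mk _ ⟨fun i j => τ (L i j), hL.comp_left τ, hs.comp_left τ, rrsIsotopic_comp_left L τ⟩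
  have hf : Function.Surjective f := by
    refine Quot.ind fun M => ?_
    obtain ⟨τ, hτ⟩ := M.2.2.2.exists_isomorphic_comp_left
    exact ⟨τ, Quot.sound hτ⟩
  have hker : Setoid.ker f = orbitRel (rrsAutotopismSubgroup L) (Equiv.Perm (Fin n)) := by
    ext σ τ
    rw [Setoid.ker_def, (isomorphic_equivalence.comap Subtype.val).quot_mk_eq_iff,
      orbitRel_apply, mem_orbit_symm]
    exact isomorphic_comp_left_iff L σ τ
  rw [← Nat.card_congr (Setoid.quotientKerEquivOfSurjective f hf), hker]

end LatinSquare

theorem stmt6 {n : ℕ} (L : Fin n → Fin n → Fin n)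
    (hL : IsLatin L) (hs : IsSymmetric L) :
    Nat.card (Quot (fun A B : {M : Fin n → Fin n → Fin n //
        IsLatin M ∧ IsSymmetric M ∧ RrsIsotopic L M} => Isomorphic A.1 B.1)) *
      Nat.card (RrsAutotopisms L) =
    ∑ᶠ p ∈ RrsAutotopisms L, psi p.1 p.2 := by
  rw [natCard_isomorphismClasses_eq_natCard_orbits hL hs, ← finsum_set_coe_eq_finsum_mem]
  calc _ = ∑ᶠ p : rrsAutotopismSubgroup L, Nat.card (fixedBy (Equiv.Perm (Fin n)) p) :=
        (finsum_natCard_fixedBy_eq_natCard_orbits_mul_natCard _ _).symm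
    _ = _ := finsum_congr (card_fixedBy_rrsAutotopismSubgroup L)
end

section
/- Let n be odd. The number of isomorphism classes of idempotent symmetric Latin squares of order n equals the number of isomorphism classes of Latin squares of order n+1 that contain a reduced unipotent symmetric Latin square. -/
section Aux

variable {n : ℕ}

/-- Prolongation: extend an order-`n` square to order `n+1` by adding a new
row/column/symbol at index `0`. -/
def extLS (L : Fin n → Fin n → Fin n) : Fin (n+1) → Fin (n+1) → Fin (n+1) :=
  fun i j =>
    if hi : i = 0 then j
    else if hj : j = 0 then i
    else if i = j then 0 else (L (i.pred hi) (j.pred hj)).succ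

/-- Reduction: delete row/column/symbol `0`, putting `i` on the diagonal. -/
def resLS (M : Fin (n+1) → Fin (n+1) → Fin (n+1)) : Fin n → Fin n → Fin n :=
  fun i j => if h : M i.succ j.succ = 0 then i else (M i.succ j.succ).pred h

lemma ext_zero_left (L : Fin n → Fin n → Fin n) (j : Fin (n+1)) :
    extLS L 0 j = j := by simp [extLS]

lemma ext_zero_right (L : Fin n → Fin n → Fin n) (i : Fin (n+1)) :
    extLS L i 0 = i := by
  unfold extLS
  split
  · next h => rw [h]
  · simp

lemma ext_diag (L : Fin n → Fin n → Fin n) (i : Fin (n+1)) :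
    extLS L i i = 0 := by
  unfold extLS
  split
  · next h => rw [h]
  · simp

lemma ext_succ (L : Fin n → Fin n → Fin n) {i j : Fin n} (h : i ≠ j) :
    extLS L i.succ j.succ = (L i j).succ := by
  simp [extLS, Fin.succ_ne_zero, (Fin.succ_inj.not.mpr h : ¬ i.succ = j.succ)]

lemma diag0 {M : Fin (n+1) → Fin (n+1) → Fin (n+1)} (hU : IsUnipotent M)
    (hR : IsReducedLS M) (i : Fin (n+1)) : M i i = 0 := by
  rw [hU i 0]
  exact (hR 0 0).1 rfl

lemma offdiag_ne {M : Fin (n+1) → Fin (n+1) → Fin (n+1)} (hL : IsLatin M)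
    (hU : IsUnipotent M) (hR : IsReducedLS M) {i j : Fin n} (h : i ≠ j) :
    M i.succ j.succ ≠ 0 := by
  intro h0
  have h1 : M i.succ j.succ = M i.succ i.succ := by rw [h0, diag0 hU hR]
  exact h (Fin.succ_inj.mp ((hL.1 i.succ).1 h1)).symm

lemma res_succ {M : Fin (n+1) → Fin (n+1) → Fin (n+1)} (hL : IsLatin M)
    (hU : IsUnipotent M) (hR : IsReducedLS M) {i j : Fin n} (h : i ≠ j) :
    (resLS M i j).succ = M i.succ j.succ := by
  simp [resLS, offdiag_ne hL hU hR h]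

lemma res_diag {M : Fin (n+1) → Fin (n+1) → Fin (n+1)} (hU : IsUnipotent M)
    (hR : IsReducedLS M) (i : Fin n) : resLS M i i = i := by
  simp [resLS, diag0 hU hR]

/-- Properties of the prolongation. -/
lemma ext_props {L : Fin n → Fin n → Fin n}
    (h : IsLatin L ∧ IsSymmetric L ∧ IsIdempotent L) :
    IsLatin (extLS L) ∧ IsSymmetric (extLS L) ∧ IsUnipotent (extLS L) ∧
      IsReducedLS (extLS L) := by
  obtain ⟨hL, hS, hI⟩ := h
  have hsym : IsSymmetric (extLS L) := by
    intro i j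
    induction i using Fin.cases with
    | zero =>
      induction j using Fin.cases with
      | zero => rfl
      | succ b => rw [ext_zero_left, ext_zero_right]
    | succ a =>
      induction j using Fin.cases with
      | zero => rw [ext_zero_left, ext_zero_right]
      | succ b =>
        rcases eq_or_ne a b with rfl | hab
        · rfl
        · rw [ext_succ L hab, ext_succ L hab.symm, hS a b]
  have hrows : ∀ i, Function.Bijective (extLS L i) := by
    intro i
    rw [← Finite.injective_iff_bijective]
    induction i using Fin.cases with
    | zero =>
      intro j1 j2 hj
      rwa [ext_zero_left, ext_zero_left] at hj
    | succ a =>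
      -- key: for j off the diagonal and nonzero, the entry is neither `a.succ` nor `0`
      have key : ∀ b : Fin n, a ≠ b → extLS L a.succ b.succ ≠ a.succ := by
        intro b hab hc
        rw [ext_succ L hab, Fin.succ_inj] at hc
        have : L a b = L a a := by rw [hc, hI a]
        exact hab ((hL.1 a).1 this.symm)
      intro j1 j2 hj
      induction j1 using Fin.cases with
      | zero =>
        induction j2 using Fin.cases with
        | zero => rfl
        | succ b =>
          rw [ext_zero_right] at hj
          rcases eq_or_ne a b with rfl | hab
          · exact absurd (hj.trans (ext_diag L a.succ)) (Fin.succ_ne_zero a)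
          · exact absurd hj.symm (key b hab)
      | succ b1 =>
        induction j2 using Fin.cases with
        | zero =>
          rw [ext_zero_right] at hj
          rcases eq_or_ne a b1 with rfl | hab
          · exact absurd ((ext_diag L a.succ).symm.trans hj) (Ne.symm (Fin.succ_ne_zero a))
          · exact absurd hj (key b1 hab)
        | succ b2 =>
          rcases eq_or_ne a b1 with rfl | h1 <;> rcases eq_or_ne a b2 with rfl | h2
          · rfl
          · rw [ext_diag, ext_succ L h2] at hj
            exact absurd hj.symm (Fin.succ_ne_zero _)
          · rw [ext_diag, ext_succ L h1] at hj
            exact absurd hj (Fin.succ_ne_zero _)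
          · rw [ext_succ L h1, ext_succ L h2, Fin.succ_inj] at hj
            rw [(hL.1 a).1 hj]
  refine ⟨⟨hrows, ?_⟩, hsym, ?_, ?_⟩
  · intro j
    rw [show (fun i => extLS L i j) = extLS L j from funext fun i => hsym i j]
    exact hrows j
  · intro i j
    rw [ext_diag, ext_diag]
  · intro i j
    constructor
    · intro hi
      have : i = 0 := Fin.ext (by simpa using hi)
      rw [this, ext_zero_left]
    · intro hj
      have : j = 0 := Fin.ext (by simpa using hj)
      rw [this, ext_zero_right]

/-- Properties of the reduction. -/
lemma res_props {M : Fin (n+1) → Fin (n+1) → Fin (n+1)}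
    (h : IsLatin M ∧ IsSymmetric M ∧ IsUnipotent M ∧ IsReducedLS M) :
    IsLatin (resLS M) ∧ IsSymmetric (resLS M) ∧ IsIdempotent (resLS M) := by
  obtain ⟨hL, hS, hU, hR⟩ := h
  have hsym : IsSymmetric (resLS M) := by
    intro i j
    rcases eq_or_ne i j with rfl | hij
    · rfl
    · apply Fin.succ_inj.mp
      rw [res_succ hL hU hR hij, res_succ hL hU hR hij.symm, hS]
  have hrows : ∀ i, Function.Bijective (resLS M i) := by
    intro i
    rw [← Finite.injective_iff_bijective]
    intro j1 j2 hj
    have key : ∀ b : Fin n, i ≠ b → resLS M i b ≠ i := by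
      intro b hib hc
      have h1 : M i.succ b.succ = i.succ := by
        rw [← res_succ hL hU hR hib, hc]
      have h2 : M i.succ 0 = i.succ := (hR i.succ 0).2 rfl
      exact Fin.succ_ne_zero b ((hL.1 i.succ).1 (h1.trans h2.symm))
    rcases eq_or_ne i j1 with rfl | h1 <;> rcases eq_or_ne i j2 with rfl | h2
    · rfl
    · rw [res_diag hU hR] at hj
      exact absurd hj.symm (key j2 h2)
    · rw [res_diag hU hR] at hj
      exact absurd hj (key j1 h1)
    · have : M i.succ j1.succ = M i.succ j2.succ := by
        rw [← res_succ hL hU hR h1, ← res_succ hL hU hR h2, hj]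
      exact Fin.succ_inj.mp ((hL.1 i.succ).1 this)
  refine ⟨⟨hrows, ?_⟩, hsym, fun i => res_diag hU hR i⟩
  intro j
  rw [show (fun i => resLS M i j) = resLS M j from funext fun i => hsym i j]
  exact hrows j

lemma res_ext {L : Fin n → Fin n → Fin n} (hI : IsIdempotent L) :
    resLS (extLS L) = L := by
  funext i j
  rcases eq_or_ne i j with rfl | hij
  · simp [resLS, ext_diag, hI i]
  · simp [resLS, ext_succ L hij, Fin.succ_ne_zero]

lemma ext_res {M : Fin (n+1) → Fin (n+1) → Fin (n+1)}
    (h : IsLatin M ∧ IsSymmetric M ∧ IsUnipotent M ∧ IsReducedLS M) :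
    extLS (resLS M) = M := by
  obtain ⟨hL, hS, hU, hR⟩ := h
  funext i j
  induction i using Fin.cases with
  | zero => rw [ext_zero_left, ((hR 0 j).1 rfl)]
  | succ a =>
    induction j using Fin.cases with
    | zero => rw [ext_zero_right, ((hR a.succ 0).2 rfl)]
    | succ b =>
      rcases eq_or_ne a b with rfl | hab
      · rw [ext_diag, diag0 hU hR]
      · rw [ext_succ _ hab, res_succ hL hU hR hab]

lemma ext_iso {L₁ L₂ : Fin n → Fin n → Fin n} (h : Isomorphic L₁ L₂) :
    Isomorphic (extLS L₁) (extLS L₂) := by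
  obtain ⟨α, hα⟩ := h
  refine ⟨Equiv.Perm.decomposeFin.symm (0, α), ?_⟩
  have h0 : Equiv.Perm.decomposeFin.symm ((0 : Fin (n+1)), α) 0 = 0 :=
    Equiv.Perm.decomposeFin_symm_apply_zero 0 α
  have hsucc : ∀ x : Fin n,
      Equiv.Perm.decomposeFin.symm ((0 : Fin (n+1)), α) x.succ = (α x).succ := by
    intro x
    rw [Equiv.Perm.decomposeFin_symm_apply_succ, Equiv.swap_self, Equiv.refl_apply]
  intro i j
  induction i using Fin.cases with
  | zero => rw [h0, ext_zero_left, ext_zero_left]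
  | succ a =>
    induction j using Fin.cases with
    | zero => rw [h0, ext_zero_right, ext_zero_right]
    | succ b =>
      rcases eq_or_ne a b with rfl | hab
      · rw [ext_diag, ext_diag, h0]
      · have : α a ≠ α b := fun hc => hab (α.injective hc)
        rw [hsucc a, hsucc b, ext_succ _ hab, ext_succ _ this, hsucc, hα]

lemma res_iso {M₁ M₂ : Fin (n+1) → Fin (n+1) → Fin (n+1)}
    (h1 : IsLatin M₁ ∧ IsSymmetric M₁ ∧ IsUnipotent M₁ ∧ IsReducedLS M₁)
    (h2 : IsLatin M₂ ∧ IsSymmetric M₂ ∧ IsUnipotent M₂ ∧ IsReducedLS M₂)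
    (h : Isomorphic M₁ M₂) : Isomorphic (resLS M₁) (resLS M₂) := by
  obtain ⟨β, hβ⟩ := h
  have hβ0 : β 0 = 0 := by
    have e1 : M₂ (β 0) (β 0) = β (M₁ 0 0) := hβ 0 0
    rw [diag0 h2.2.2.1 h2.2.2.2, (h1.2.2.2 0 0).1 rfl] at e1
    exact e1.symm
  rcases hpa : Equiv.Perm.decomposeFin β with ⟨p, α⟩
  have hb : Equiv.Perm.decomposeFin.symm (p, α) = β := by
    rw [← hpa]; exact Equiv.symm_apply_apply _ _
  have hp : p = 0 := by rw [← hβ0, ← hb, Equiv.Perm.decomposeFin_symm_apply_zero]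
  subst hp
  have hsucc : ∀ x : Fin n, β x.succ = (α x).succ := by
    intro x
    rw [← hb, Equiv.Perm.decomposeFin_symm_apply_succ, Equiv.swap_self,
      Equiv.refl_apply]
  refine ⟨α, fun a b => ?_⟩
  rcases eq_or_ne a b with rfl | hab
  · rw [res_diag h2.2.2.1 h2.2.2.2, res_diag h1.2.2.1 h1.2.2.2]
  · have haβ : α a ≠ α b := fun hc => hab (α.injective hc)
    apply Fin.succ_inj.mp
    rw [res_succ h2.1 h2.2.2.1 h2.2.2.2 haβ, ← hsucc, ← hsucc, hβ,
      ← res_succ h1.1 h1.2.2.1 h1.2.2.2 hab, hsucc]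

end Aux

theorem stmt8 {n : ℕ} (hn : Odd n) :
    Nat.card (Quot (fun A B : {L : Fin n → Fin n → Fin n //
        IsLatin L ∧ IsSymmetric L ∧ IsIdempotent L} => Isomorphic A.1 B.1)) =
    Nat.card (Quot (fun A B : {L : Fin (n+1) → Fin (n+1) → Fin (n+1) //
        IsLatin L ∧ IsSymmetric L ∧ IsUnipotent L ∧ IsReducedLS L} =>
      Isomorphic A.1 B.1)) := by
  clear hn
  apply Nat.card_congr
  refine ⟨Quot.map (fun A => ⟨extLS A.1, ext_props A.2⟩)
      (fun A B h => ext_iso h),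
    Quot.map (fun A => ⟨resLS A.1, res_props A.2⟩)
      (fun A B h => res_iso A.2 B.2 h), ?_, ?_⟩
  · intro q
    induction q using Quot.ind with
    | _ a =>
      exact congrArg (Quot.mk _) (Subtype.ext (res_ext a.2.2.2))
  · intro q
    induction q using Quot.ind with
    | _ a =>
      exact congrArg (Quot.mk _) (Subtype.ext (ext_res a.2))
end

section
/- Let n be even. The number of reduced unipotent symmetric Latin squares of order n equals the number of idempotent symmetric Latin squares of order n−1, which in turn equals the number of reduced symmetric Latin squares of order n−1. -/
open Equiv Function

theorem Function.Involutive.exists_fixed_point_of_odd_card {α : Type*} [Fintype α] {f : α → α}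
    (hf : Involutive f) (hα : Odd (Fintype.card α)) : ∃ a, f a = a := by
  have : Fact (Nat.Prime 2) := ⟨Nat.prime_two⟩
  refine Equiv.Perm.exists_fixed_point_of_prime (p := 2) (n := 1) hα.not_two_dvd_nat
    (σ := hf.toPerm f) ?_
  ext a; simp [sq, hf a]

variable {m : ℕ}

lemma IsLatin.of_isSymmetric {A : Fin m → Fin m → Fin m} (hS : IsSymmetric A)
    (hrow : ∀ i, Surjective (A i)) : IsLatin A :=
  ⟨fun i => (hrow i).bijective_of_finite, fun j => by
    simpa only [hS _ j] using (hrow j).bijective_of_finite⟩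

lemma isReducedLS_iff [NeZero m] {A : Fin m → Fin m → Fin m} :
    IsReducedLS A ↔ ∀ i, A 0 i = i ∧ A i 0 = i := by
  simp only [IsReducedLS, Fin.val_eq_zero_iff]
  constructor
  · intro h i; exact ⟨(h 0 i).1 rfl, (h i 0).2 rfl⟩
  · rintro h i j; constructor <;> rintro rfl
    exacts [(h j).1, (h i).2]

section Extension

def unipotentExtend (L : Fin m → Fin m → Fin m) : Fin (m+1) → Fin (m+1) → Fin (m+1) :=
  fun i j => Fin.cases j
    (fun i' => Fin.cases i'.succ (fun j' => if i' = j' then 0 else (L i' j').succ) j) i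

-- In a reduced unipotent square the inner entries equal to `0` are exactly the diagonal ones;
-- they are sent back to `i`, all others are shifted down by one.
def idempotentRestrict (B : Fin (m+1) → Fin (m+1) → Fin (m+1)) : Fin m → Fin m → Fin m :=
  fun i j => Fin.cases i id (B i.succ j.succ)

variable {L : Fin m → Fin m → Fin m}

@[simp] lemma unipotentExtend_zero_left (j : Fin (m+1)) : unipotentExtend L 0 j = j := rfl

@[simp] lemma unipotentExtend_succ_zero (i : Fin m) : unipotentExtend L i.succ 0 = i.succ := rfl

@[simp] lemma unipotentExtend_succ_succ (i j : Fin m) :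
    unipotentExtend L i.succ j.succ = if i = j then 0 else (L i j).succ := rfl

lemma isSymmetric_unipotentExtend (hS : IsSymmetric L) : IsSymmetric (unipotentExtend L) := by
  intro i j
  cases i using Fin.cases <;> cases j using Fin.cases
  all_goals simp [hS _ _, eq_comm]

lemma unipotentExtend_self (i : Fin (m+1)) : unipotentExtend L i i = 0 := by
  cases i using Fin.cases <;> simp

lemma isLatin_unipotentExtend (hL : IsLatin L) (hS : IsSymmetric L) (hI : IsIdempotent L) :
    IsLatin (unipotentExtend L) := by
  refine IsLatin.of_isSymmetric (isSymmetric_unipotentExtend hS) fun i => ?_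
  cases i using Fin.cases with
  | zero => exact fun k => ⟨k, rfl⟩
  | succ i =>
    intro k
    cases k using Fin.cases with
    | zero => exact ⟨i.succ, by simp⟩
    | succ k =>
      by_cases hk : k = i
      · exact ⟨0, by simp [hk]⟩
      obtain ⟨j, rfl⟩ := (hL.1 i).2 k
      have hij : i ≠ j := fun h => hk (by rw [← h, hI])
      exact ⟨j.succ, by simp [hij]⟩

lemma isUnipotent_unipotentExtend : IsUnipotent (unipotentExtend L) := fun i j => by
  rw [unipotentExtend_self, unipotentExtend_self]

lemma isReducedLS_unipotentExtend : IsReducedLS (unipotentExtend L) :=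
  isReducedLS_iff.2 fun i => ⟨rfl, by cases i using Fin.cases <;> rfl⟩

end Extension

section Restriction

variable {B : Fin (m+1) → Fin (m+1) → Fin (m+1)}

lemma IsReducedLS.self_eq_zero (hU : IsUnipotent B) (hR : IsReducedLS B) (i : Fin (m+1)) :
    B i i = 0 := by
  rw [hU i 0, (isReducedLS_iff.1 hR 0).1]

lemma idempotentRestrict_self (hU : IsUnipotent B) (hR : IsReducedLS B) (i : Fin m) :
    idempotentRestrict B i i = i := by
  simp [idempotentRestrict, hR.self_eq_zero hU]

lemma idempotentRestrict_of_eq_succ {i j : Fin m} (k : Fin m) (h : B i.succ j.succ = k.succ) :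
    idempotentRestrict B i j = k := by
  simp [idempotentRestrict, h]

lemma succ_idempotentRestrict_of_ne (hL : IsLatin B) (hU : IsUnipotent B) (hR : IsReducedLS B)
    {i j : Fin m} (h : i ≠ j) : (idempotentRestrict B i j).succ = B i.succ j.succ := by
  have hne : B i.succ j.succ ≠ 0 := by
    rw [← hR.self_eq_zero hU i.succ, (hL.1 _).1.ne_iff, Ne, Fin.succ_inj]
    exact h.symm
  obtain ⟨k, hk⟩ := Fin.eq_succ_of_ne_zero hne
  rw [idempotentRestrict_of_eq_succ k hk, hk]

lemma isSymmetric_idempotentRestrict (hL : IsLatin B) (hS : IsSymmetric B) (hU : IsUnipotent B)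
    (hR : IsReducedLS B) : IsSymmetric (idempotentRestrict B) := fun i j => by
  rcases eq_or_ne i j with rfl | h
  · rfl
  · apply Fin.succ_injective
    rw [succ_idempotentRestrict_of_ne hL hU hR h, succ_idempotentRestrict_of_ne hL hU hR h.symm, hS]

lemma isLatin_idempotentRestrict (hL : IsLatin B) (hS : IsSymmetric B) (hU : IsUnipotent B)
    (hR : IsReducedLS B) : IsLatin (idempotentRestrict B) := by
  refine IsLatin.of_isSymmetric (isSymmetric_idempotentRestrict hL hS hU hR) fun i k => ?_
  by_cases hk : k = i
  · exact ⟨i, hk ▸ idempotentRestrict_self hU hR i⟩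
  obtain ⟨j, hj⟩ := (hL.1 i.succ).2 k.succ
  cases j using Fin.cases with
  | zero =>
    rw [(isReducedLS_iff.1 hR _).2, Fin.succ_inj] at hj
    exact absurd hj.symm hk
  | succ j => exact ⟨j, idempotentRestrict_of_eq_succ k hj⟩

lemma idempotentRestrict_unipotentExtend {L : Fin m → Fin m → Fin m} (hI : IsIdempotent L) :
    idempotentRestrict (unipotentExtend L) = L := by
  funext i j
  by_cases h : i = j
  · subst h; simp [idempotentRestrict, hI i]
  · exact idempotentRestrict_of_eq_succ _ (by simp [h])

lemma unipotentExtend_idempotentRestrict (hL : IsLatin B) (hU : IsUnipotent B)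
    (hR : IsReducedLS B) : unipotentExtend (idempotentRestrict B) = B := by
  funext i j
  cases i using Fin.cases with
  | zero => exact ((isReducedLS_iff.1 hR j).1).symm
  | succ i =>
    cases j using Fin.cases with
    | zero => exact ((isReducedLS_iff.1 hR _).2).symm
    | succ j =>
      rw [unipotentExtend_succ_succ]
      split_ifs with h
      · rw [h, hR.self_eq_zero hU]
      · exact succ_idempotentRestrict_of_ne hL hU hR h

end Restriction

def reducedUnipotentEquivIdempotent (m : ℕ) :
    {B : Fin (m+1) → Fin (m+1) → Fin (m+1) //
        IsLatin B ∧ IsSymmetric B ∧ IsUnipotent B ∧ IsReducedLS B} ≃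
      {L : Fin m → Fin m → Fin m // IsLatin L ∧ IsSymmetric L ∧ IsIdempotent L} where
  toFun B := ⟨idempotentRestrict B.1,
    isLatin_idempotentRestrict B.2.1 B.2.2.1 B.2.2.2.1 B.2.2.2.2,
    isSymmetric_idempotentRestrict B.2.1 B.2.2.1 B.2.2.2.1 B.2.2.2.2,
    idempotentRestrict_self B.2.2.2.1 B.2.2.2.2⟩
  invFun L := ⟨unipotentExtend L.1, isLatin_unipotentExtend L.2.1 L.2.2.1 L.2.2.2,
    isSymmetric_unipotentExtend L.2.2.1, isUnipotent_unipotentExtend, isReducedLS_unipotentExtend⟩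
  left_inv B := Subtype.ext (unipotentExtend_idempotentRestrict B.2.1 B.2.2.2.1 B.2.2.2.2)
  right_inv L := Subtype.ext (idempotentRestrict_unipotentExtend L.2.2.2)

section Reindex

variable {α : Type*}

def reindex (A : α → α → α) (e : Perm α) : α → α → α := fun i j => A (e i) (e j)

@[simp] lemma reindex_apply (A : α → α → α) (e : Perm α) (i j : α) :
    reindex A e i j = A (e i) (e j) := rfl

lemma reindex_reindex_symm (A : α → α → α) (e : Perm α) :
    reindex (reindex A e.symm) e = A := by
  funext i j; simp

end Reindex

section OddOrder

variable {A : Fin m → Fin m → Fin m}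

lemma IsLatin.reindex (hL : IsLatin A) (e : Perm (Fin m)) : IsLatin (reindex A e) :=
  ⟨fun i => (hL.1 (e i)).comp e.bijective, fun j => (hL.2 (e j)).comp e.bijective⟩

lemma IsSymmetric.reindex (hS : IsSymmetric A) (e : Perm (Fin m)) :
    IsSymmetric (reindex A e) := fun i j => hS (e i) (e j)

lemma IsLatin.bijective_diag_of_odd (hm : Odd m) (hL : IsLatin A) (hS : IsSymmetric A) :
    Bijective fun i => A i i := by
  refine Surjective.bijective_of_finite fun k => ?_
  -- The column of `k` in row `i` defines an involution whose fixed points are the diagonal `k`s.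
  let col i := (Equiv.ofBijective (A i) (hL.1 i)).symm k
  have hcol i : A i (col i) = k := Equiv.ofBijective_apply_symm_apply _ _ k
  have hinv : Involutive col := fun i =>
    (hL.1 (col i)).1 ((hcol (col i)).trans ((hcol i).symm.trans (hS i (col i))))
  obtain ⟨i, hi⟩ := hinv.exists_fixed_point_of_odd_card (by simpa using hm)
  exact ⟨i, by simpa [hi] using hcol i⟩

noncomputable def rowPerm (hL : IsLatin A) (i : Fin m) : Perm (Fin m) :=
  Equiv.ofBijective (A i) (hL.1 i)

noncomputable def diagPerm (hm : Odd m) (hL : IsLatin A) (hS : IsSymmetric A) : Perm (Fin m) :=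
  Equiv.ofBijective _ (hL.bijective_diag_of_odd hm hS)

@[simp] lemma rowPerm_apply (hL : IsLatin A) (i j : Fin m) : rowPerm hL i j = A i j := rfl

lemma isReducedLS_reindex_rowPerm_symm [NeZero m] (hL : IsLatin A) (hS : IsSymmetric A)
    (h : A 0 0 = 0) : IsReducedLS (reindex A (rowPerm hL 0).symm) := by
  have h0 : (rowPerm hL 0).symm 0 = 0 := (Equiv.symm_apply_eq _).2 h.symm
  refine isReducedLS_iff.2 fun i => ⟨?_, ?_⟩
  · simp only [reindex_apply, h0]; exact (rowPerm hL 0).apply_symm_apply i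
  · simp only [reindex_apply, h0, hS _ 0]; exact (rowPerm hL 0).apply_symm_apply i

lemma reindex_diagPerm_symm_isIdempotent (hm : Odd m) (hL : IsLatin A) (hS : IsSymmetric A) :
    IsIdempotent (reindex A (diagPerm hm hL hS).symm) :=
  (diagPerm hm hL hS).apply_symm_apply

noncomputable def idempotentEquivReduced [NeZero m] (hm : Odd m) :
    {L : Fin m → Fin m → Fin m // IsLatin L ∧ IsSymmetric L ∧ IsIdempotent L} ≃
      {A : Fin m → Fin m → Fin m // IsLatin A ∧ IsSymmetric A ∧ IsReducedLS A} where
  toFun L := ⟨reindex L.1 (rowPerm L.2.1 0).symm, IsLatin.reindex L.2.1 _,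
    IsSymmetric.reindex L.2.2.1 _, isReducedLS_reindex_rowPerm_symm L.2.1 L.2.2.1 (L.2.2.2 0)⟩
  invFun A := ⟨reindex A.1 (diagPerm hm A.2.1 A.2.2.1).symm, IsLatin.reindex A.2.1 _,
    IsSymmetric.reindex A.2.2.1 _, reindex_diagPerm_symm_isIdempotent hm A.2.1 A.2.2.1⟩
  left_inv := by
    rintro ⟨L, hL, hS, hI⟩
    refine Subtype.ext ?_
    have hdiag : diagPerm hm (IsLatin.reindex hL _) (IsSymmetric.reindex hS _) =
        (rowPerm hL 0).symm := Equiv.ext fun i => hI _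
    dsimp only
    rw [hdiag, Equiv.symm_symm, reindex_reindex_symm]
  right_inv := by
    rintro ⟨A, hL, hS, hR⟩
    refine Subtype.ext ?_
    have h0 : (diagPerm hm hL hS).symm 0 = 0 :=
      (Equiv.symm_apply_eq _).2 (isReducedLS_iff.1 hR 0).1.symm
    have hrow : rowPerm (IsLatin.reindex hL (diagPerm hm hL hS).symm) 0 =
        (diagPerm hm hL hS).symm :=
      Equiv.ext fun j => by simp [h0, (isReducedLS_iff.1 hR _).1]
    dsimp only
    rw [hrow, Equiv.symm_symm, reindex_reindex_symm]

end OddOrder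

theorem stmt9 {n : ℕ} (hn : Even n) :
    Nat.card {L : Fin n → Fin n → Fin n //
        IsLatin L ∧ IsSymmetric L ∧ IsUnipotent L ∧ IsReducedLS L} =
      Nat.card {L : Fin (n-1) → Fin (n-1) → Fin (n-1) //
        IsLatin L ∧ IsSymmetric L ∧ IsIdempotent L} ∧
    Nat.card {L : Fin (n-1) → Fin (n-1) → Fin (n-1) //
        IsLatin L ∧ IsSymmetric L ∧ IsIdempotent L} =
      Nat.card {L : Fin (n-1) → Fin (n-1) → Fin (n-1) //
        IsLatin L ∧ IsSymmetric L ∧ IsReducedLS L} := by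
  rcases n with _ | m
  · simp [IsLatin, IsSymmetric, IsUnipotent, IsReducedLS, IsIdempotent]
  · have hm : Odd m := by simpa [Nat.even_add_one] using hn
    have : NeZero m := ⟨hm.pos.ne'⟩
    exact ⟨Nat.card_congr (reducedUnipotentEquivIdempotent m),
      Nat.card_congr (idempotentEquivReduced (m := m) hm)⟩
end

section
/- Let n be even. The number of unipotent symmetric Latin squares of order n equals n! times the number of reduced symmetric Latin squares of order n−1. -/
section Aux

open Equiv

variable {m : ℕ}

/-- An involution on a finite type of odd cardinality has a fixed point. -/
lemma aux_invol_fixed {α : Type*} [Fintype α] (hodd : Odd (Fintype.card α))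
    {f : α → α} (hf : Function.Involutive f) : ∃ a, f a = a := by
  have h2 : ¬ (2 ∣ Fintype.card α) := by
    rw [Nat.two_dvd_ne_zero]; rcases hodd with ⟨k, hk⟩; omega
  have : (hf.toPerm ^ 2 ^ 1 : Perm α) = 1 := by
    ext a
    simp [pow_succ, pow_zero, Equiv.Perm.mul_apply, hf a]
  obtain ⟨a, ha⟩ := Equiv.Perm.exists_fixed_point_of_prime (p := 2) h2 this
  exact ⟨a, ha⟩

/-- The diagonal of a symmetric Latin square of odd order is a permutation. -/
lemma diag_injective (hm : Odd m) {M : Fin m → Fin m → Fin m}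
    (hL : IsLatin M) (hs : IsSymmetric M) :
    Function.Injective (fun i => M i i) := by
  have : Function.Surjective (fun i => M i i) := by
    intro k
    set f : Fin m → Fin m := fun i => (Equiv.ofBijective (M i) (hL.1 i)).symm k with hf
    have hMf : ∀ i, M i (f i) = k := fun i =>
      (Equiv.ofBijective (M i) (hL.1 i)).apply_symm_apply k
    have hinv : Function.Involutive f := by
      intro i
      have h1 : M (f i) (f (f i)) = k := hMf (f i)
      have h2 : M (f i) i = k := (hs i (f i)) ▸ hMf i
      exact (hL.1 (f i)).1 (h1.trans h2.symm)
    obtain ⟨a, ha⟩ := aux_invol_fixed (by simpa using hm) hinv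
    refine ⟨a, ?_⟩
    have h := hMf a
    rw [ha] at h
    exact h
  exact (Finite.injective_iff_surjective).mpr this

variable [NeZero m]

/-- cast down, sending `last` to junk value 0 -/
def dn (x : Fin (m + 1)) : Fin m :=
  if h : x = Fin.last m then 0 else x.castPred h

lemma dn_castSucc (y : Fin m) : dn y.castSucc = y := by
  rw [dn, dif_neg (Fin.castSucc_lt_last y).ne, Fin.castPred_castSucc]

lemma castSucc_dn {x : Fin (m + 1)} (h : x ≠ Fin.last m) : (dn x).castSucc = x := by
  rw [dn, dif_neg h, Fin.castSucc_castPred]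

lemma dn_zero : dn (0 : Fin (m + 1)) = 0 := by
  have h0 : (0 : Fin (m + 1)) ≠ Fin.last m := by
    intro h
    have := congrArg Fin.val h
    simp [Fin.val_last] at this
    exact (NeZero.ne m) this.symm
  rw [dn, dif_neg h0]
  ext; simp

/-- Backward map: build a unipotent symmetric Latin square from a permutation
and a reduced symmetric Latin square of one smaller order. -/
def bwd (σ : Perm (Fin (m + 1))) (M : Fin m → Fin m → Fin m) :
    Fin (m + 1) → Fin (m + 1) → Fin (m + 1) := fun i j =>
  if i = j then σ (Fin.last m)
  else if i = Fin.last m then σ (Fin.castSucc (M (dn j) (dn j)))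
  else if j = Fin.last m then σ (Fin.castSucc (M (dn i) (dn i)))
  else σ (Fin.castSucc (M (dn i) (dn j)))

/-- Forward permutation. -/
noncomputable def fσ (L : Fin (m + 1) → Fin (m + 1) → Fin (m + 1)) (h : Function.Bijective (L 0)) :
    Perm (Fin (m + 1)) :=
  (Equiv.swap 0 (Fin.last m)).trans (Equiv.ofBijective (L 0) h)

/-- Forward reduced square. -/
noncomputable def fM (L : Fin (m + 1) → Fin (m + 1) → Fin (m + 1)) (h : Function.Bijective (L 0)) :
    Fin m → Fin m → Fin m := fun i j =>
  if i = j then dn ((fσ L h).symm (L i.castSucc (Fin.last m)))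
  else dn ((fσ L h).symm (L i.castSucc j.castSucc))

end Aux


section Main

open Equiv

set_option linter.unusedSectionVars false

variable {m : ℕ} [NeZero m]

lemma castSucc_zero' : Fin.castSucc (0 : Fin m) = (0 : Fin (m+1)) := by
  ext; simp

lemma ne_diag {L : Fin (m+1) → Fin (m+1) → Fin (m+1)} (hL : IsLatin L)
    (hu : IsUnipotent L) {i j : Fin (m+1)} (h : j ≠ i) : L i j ≠ L 0 0 := by
  intro e
  exact h ((hL.1 i).1 (e.trans (hu 0 i)))

lemma fσ_last_eq {L : Fin (m+1) → Fin (m+1) → Fin (m+1)} (h : Function.Bijective (L 0)) :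
    fσ L h (Fin.last m) = L 0 0 := by
  simp [fσ, Equiv.trans_apply, Equiv.swap_apply_right, Equiv.ofBijective_apply]

lemma fσ_apply_ne {L : Fin (m+1) → Fin (m+1) → Fin (m+1)} (h : Function.Bijective (L 0))
    {x : Fin (m+1)} (hx0 : x ≠ 0) (hxl : x ≠ Fin.last m) : fσ L h x = L 0 x := by
  simp [fσ, Equiv.trans_apply, Equiv.swap_apply_of_ne_of_ne hx0 hxl, Equiv.ofBijective_apply]

lemma fσ_zero_eq {L : Fin (m+1) → Fin (m+1) → Fin (m+1)} (h : Function.Bijective (L 0)) :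
    fσ L h 0 = L 0 (Fin.last m) := by
  simp [fσ, Equiv.trans_apply, Equiv.swap_apply_left, Equiv.ofBijective_apply]

lemma castSucc_dn_symm {L : Fin (m+1) → Fin (m+1) → Fin (m+1)} (h : Function.Bijective (L 0))
    {k : Fin (m+1)} (hk : k ≠ L 0 0) :
    Fin.castSucc (dn ((fσ L h).symm k)) = (fσ L h).symm k := by
  apply castSucc_dn
  intro e
  apply hk
  have := congrArg (fσ L h) e
  rwa [Equiv.apply_symm_apply, fσ_last_eq] at this

lemma fσ_round {L : Fin (m+1) → Fin (m+1) → Fin (m+1)} (h : Function.Bijective (L 0))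
    {k : Fin (m+1)} (hk : k ≠ L 0 0) :
    fσ L h (Fin.castSucc (dn ((fσ L h).symm k))) = k := by
  rw [castSucc_dn_symm h hk, Equiv.apply_symm_apply]

lemma zero_ne_last : (0 : Fin (m+1)) ≠ Fin.last m := by
  intro h
  have := congrArg Fin.val h
  simp [Fin.val_last] at this
  exact (NeZero.ne m) this.symm

/-- the color of the cell `(i,j)` of the forward square -/
lemma fM_eq {L : Fin (m+1) → Fin (m+1) → Fin (m+1)} (h : Function.Bijective (L 0))
    (i j : Fin m) : fM L h i j =
      dn ((fσ L h).symm (if j = i then L i.castSucc (Fin.last m)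
        else L i.castSucc j.castSucc)) := by
  unfold fM
  by_cases e : i = j
  · subst e; simp
  · rw [if_neg e, if_neg (Ne.symm e)]

lemma color_ne {L : Fin (m+1) → Fin (m+1) → Fin (m+1)} (hL : IsLatin L)
    (hu : IsUnipotent L) (i j : Fin m) :
    (if j = i then L i.castSucc (Fin.last m) else L i.castSucc j.castSucc) ≠ L 0 0 := by
  by_cases e : j = i
  · rw [if_pos e]
    exact ne_diag hL hu (Fin.castSucc_lt_last i).ne'
  · rw [if_neg e]
    exact ne_diag hL hu fun hc => e (Fin.castSucc_injective m hc)

lemma fM_symm {L : Fin (m+1) → Fin (m+1) → Fin (m+1)} (hL : IsLatin L)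
    (hs : IsSymmetric L) (i j : Fin m) : fM L (hL.1 0) i j = fM L (hL.1 0) j i := by
  rw [fM_eq, fM_eq]
  by_cases e : i = j
  · subst e; rfl
  · rw [if_neg (Ne.symm e), if_neg e, hs]

lemma fM_row_inj {L : Fin (m+1) → Fin (m+1) → Fin (m+1)} (hL : IsLatin L)
    (hu : IsUnipotent L) (i : Fin m) : Function.Injective (fM L (hL.1 0) i) := by
  intro j j' e
  rw [fM_eq, fM_eq] at e
  have e2 := congrArg Fin.castSucc e
  rw [castSucc_dn_symm (hL.1 0) (color_ne hL hu i j),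
      castSucc_dn_symm (hL.1 0) (color_ne hL hu i j')] at e2
  have e3 := (fσ L (hL.1 0)).symm.injective e2
  by_cases h1 : j = i <;> by_cases h2 : j' = i
  · rw [h1, h2]
  · rw [if_pos h1, if_neg h2] at e3
    exact absurd ((hL.1 i.castSucc).1 e3) (Fin.castSucc_lt_last j').ne'
  · rw [if_neg h1, if_pos h2] at e3
    exact absurd ((hL.1 i.castSucc).1 e3).symm (Fin.castSucc_lt_last j).ne'
  · rw [if_neg h1, if_neg h2] at e3
    exact Fin.castSucc_injective m ((hL.1 i.castSucc).1 e3)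

lemma fwd_spec {L : Fin (m+1) → Fin (m+1) → Fin (m+1)} (hL : IsLatin L)
    (hs : IsSymmetric L) (hu : IsUnipotent L) :
    IsLatin (fM L (hL.1 0)) ∧ IsSymmetric (fM L (hL.1 0)) ∧ IsReducedLS (fM L (hL.1 0)) := by
  have hrow : ∀ i, Function.Bijective (fM L (hL.1 0) i) := fun i =>
    Finite.injective_iff_bijective.mp (fM_row_inj hL hu i)
  have hsym : IsSymmetric (fM L (hL.1 0)) := fM_symm hL hs
  refine ⟨⟨hrow, fun j => ?_⟩, hsym, ?_⟩
  · have : (fun i => fM L (hL.1 0) i j) = fM L (hL.1 0) j := funext fun i => hsym i j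
    rw [this]; exact hrow j
  · -- reduced
    have hfirst : ∀ j : Fin m, fM L (hL.1 0) 0 j = j := by
      intro j
      rw [fM_eq]
      by_cases e : j = 0
      · subst e
        rw [if_pos rfl, castSucc_zero', ← fσ_zero_eq (hL.1 0), Equiv.symm_apply_apply,
          dn_zero]
      · rw [if_neg e, castSucc_zero']
        have hj0 : (j.castSucc : Fin (m+1)) ≠ 0 := by
          rw [← castSucc_zero']
          exact fun hc => e (Fin.castSucc_injective m hc)
        rw [← fσ_apply_ne (hL.1 0) hj0 (Fin.castSucc_lt_last j).ne, Equiv.symm_apply_apply,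
          dn_castSucc]
    intro i j
    constructor
    · intro hi
      have : i = 0 := Fin.ext (by simpa using hi)
      subst this
      exact hfirst j
    · intro hj
      have : j = 0 := Fin.ext (by simpa using hj)
      subst this
      rw [hsym]
      exact hfirst i

/-- the cell-code of the backward square -/
def code (M : Fin m → Fin m → Fin m) (i j : Fin (m+1)) : Fin (m+1) :=
  if i = j then Fin.last m
  else if i = Fin.last m then Fin.castSucc (M (dn j) (dn j))
  else if j = Fin.last m then Fin.castSucc (M (dn i) (dn i))
  else Fin.castSucc (M (dn i) (dn j))

lemma code_symm {M : Fin m → Fin m → Fin m} (hs : IsSymmetric M) (i j : Fin (m+1)) :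
    code M i j = code M j i := by
  unfold code
  by_cases e : i = j
  · subst e; rfl
  · rw [if_neg e, if_neg (Ne.symm e)]
    by_cases hi : i = Fin.last m
    · have hj : j ≠ Fin.last m := fun hc => e (hi.trans hc.symm)
      rw [if_pos hi, if_neg hj, if_pos hi]
    · rw [if_neg hi]
      by_cases hj : j = Fin.last m
      · rw [if_pos hj, if_pos hj]
      · rw [if_neg hj, if_neg hj, if_neg hi, hs]

lemma code_row_inj (hm : Odd m) {M : Fin m → Fin m → Fin m}
    (hM : IsLatin M) (hs : IsSymmetric M) (i : Fin (m+1)) :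
    Function.Injective (code M i) := by
  have hdiag := diag_injective hm hM hs
  intro j j' e
  unfold code at e
  by_cases h1 : i = j <;> by_cases h2 : i = j'
  · rw [← h1, ← h2]
  · rw [if_pos h1, if_neg h2] at e
    split_ifs at e <;> exact absurd e.symm (Fin.castSucc_lt_last _).ne
  · rw [if_neg h1, if_pos h2] at e
    split_ifs at e <;> exact absurd e (Fin.castSucc_lt_last _).ne
  · rw [if_neg h1, if_neg h2] at e
    by_cases hi : i = Fin.last m
    · rw [if_pos hi, if_pos hi] at e
      have hj : j ≠ Fin.last m := fun hc => h1 (hi.trans hc.symm)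
      have hj' : j' ≠ Fin.last m := fun hc => h2 (hi.trans hc.symm)
      have := hdiag (Fin.castSucc_injective m e)
      rw [← castSucc_dn hj, ← castSucc_dn hj', this]
    · rw [if_neg hi, if_neg hi] at e
      by_cases hj : j = Fin.last m <;> by_cases hj' : j' = Fin.last m
      · rw [hj, hj']
      · rw [if_pos hj, if_neg hj'] at e
        have := (hM.1 (dn i)).1 (Fin.castSucc_injective m e)
        have : i = j' := by rw [← castSucc_dn hi, ← castSucc_dn hj', this]
        exact absurd this h2
      · rw [if_neg hj, if_pos hj'] at e
        have := (hM.1 (dn i)).1 (Fin.castSucc_injective m e)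
        have : i = j := by rw [← castSucc_dn hi, ← castSucc_dn hj, ← this]
        exact absurd this h1
      · rw [if_neg hj, if_neg hj'] at e
        have := (hM.1 (dn i)).1 (Fin.castSucc_injective m e)
        rw [← castSucc_dn hj, ← castSucc_dn hj', this]

lemma bwd_spec (hm : Odd m) (σ : Perm (Fin (m+1))) {M : Fin m → Fin m → Fin m}
    (hM : IsLatin M) (hs : IsSymmetric M) :
    IsLatin (bwd σ M) ∧ IsSymmetric (bwd σ M) ∧ IsUnipotent (bwd σ M) := by
  have hb : ∀ i j, bwd σ M i j = σ (code M i j) := by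
    intro i j; unfold bwd code
    split_ifs <;> rfl
  have hsym : IsSymmetric (bwd σ M) := by
    intro i j; rw [hb, hb, code_symm hs]
  have hrow : ∀ i, Function.Bijective (bwd σ M i) := by
    intro i
    apply Finite.injective_iff_bijective.mp
    intro j j' e
    rw [hb, hb] at e
    exact code_row_inj hm hM hs i (σ.injective e)
  refine ⟨⟨hrow, fun j => ?_⟩, hsym, fun i j => ?_⟩
  · have : (fun i => bwd σ M i j) = bwd σ M j := funext fun i => hsym i j
    rw [this]; exact hrow j
  · rw [hb, hb]
    unfold code
    rw [if_pos rfl, if_pos rfl]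

lemma code_diag (M : Fin m → Fin m → Fin m) (i : Fin (m+1)) :
    code M i i = Fin.last m := by unfold code; rw [if_pos rfl]

lemma code_ne_last {M : Fin m → Fin m → Fin m} {i j : Fin (m+1)} (h : i ≠ j)
    (hi : i ≠ Fin.last m) (hj : j ≠ Fin.last m) :
    code M i j = Fin.castSucc (M (dn i) (dn j)) := by
  unfold code; rw [if_neg h, if_neg hi, if_neg hj]

lemma code_last_right {M : Fin m → Fin m → Fin m} {i : Fin (m+1)} (hi : i ≠ Fin.last m) :
    code M i (Fin.last m) = Fin.castSucc (M (dn i) (dn i)) := by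
  unfold code; rw [if_neg hi, if_neg hi, if_pos rfl]

lemma code_last_left {M : Fin m → Fin m → Fin m} {j : Fin (m+1)} (hj : j ≠ Fin.last m) :
    code M (Fin.last m) j = Fin.castSucc (M (dn j) (dn j)) := by
  unfold code; rw [if_neg (Ne.symm hj), if_pos rfl]

noncomputable def mainEquiv (hm : Odd m) :
    {L : Fin (m+1) → Fin (m+1) → Fin (m+1) // IsLatin L ∧ IsSymmetric L ∧ IsUnipotent L} ≃
      Perm (Fin (m+1)) × {M : Fin m → Fin m → Fin m //
        IsLatin M ∧ IsSymmetric M ∧ IsReducedLS M} where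
  toFun := fun L =>
    ⟨fσ L.1 (L.2.1.1 0), ⟨fM L.1 (L.2.1.1 0), fwd_spec L.2.1 L.2.2.1 L.2.2.2⟩⟩
  invFun := fun p =>
    ⟨bwd p.1 p.2.1, by
      obtain ⟨h1, h2, h3⟩ := bwd_spec hm p.1 p.2.2.1 p.2.2.2.1
      exact ⟨h1, h2, h3⟩⟩
  left_inv := by
    rintro ⟨L, hL, hs, hu⟩
    apply Subtype.ext
    dsimp only
    set h := hL.1 0 with hh
    funext i j
    have hb : ∀ i j, bwd (fσ L h) (fM L h) i j = fσ L h (code (fM L h) i j) := by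
      intro i j; unfold bwd code; split_ifs <;> rfl
    rw [hb]
    by_cases hij : i = j
    · subst hij
      rw [code_diag, fσ_last_eq, hu 0 i]
    · by_cases hi : i = Fin.last m
      · subst hi
        have hj : j ≠ Fin.last m := fun hc => hij hc.symm
        rw [code_last_left hj]
        have hfm : fM L h (dn j) (dn j) = dn ((fσ L h).symm (L j (Fin.last m))) := by
          rw [fM_eq, if_pos rfl, castSucc_dn hj]
        rw [hfm, fσ_round h (ne_diag hL hu (Ne.symm hj)), hs]
      · by_cases hj : j = Fin.last m
        · subst hj
          rw [code_last_right hi]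
          have hfm : fM L h (dn i) (dn i) = dn ((fσ L h).symm (L i (Fin.last m))) := by
            rw [fM_eq, if_pos rfl, castSucc_dn hi]
          rw [hfm, fσ_round h (ne_diag hL hu (Ne.symm hi))]
        · rw [code_ne_last hij hi hj]
          have hfm : fM L h (dn i) (dn j) = dn ((fσ L h).symm (L i j)) := by
            rw [fM_eq, if_neg, castSucc_dn hi, castSucc_dn hj]
            intro hc
            exact hij (by rw [← castSucc_dn hi, ← castSucc_dn hj, hc])
          rw [hfm, fσ_round h (ne_diag hL hu (Ne.symm hij))]
  right_inv := by
    rintro ⟨σ, M, hM, hs, hr⟩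
    obtain ⟨hL, hLs, hLu⟩ := bwd_spec hm σ hM hs
    have hb : ∀ i j, bwd σ M i j = σ (code M i j) := by
      intro i j; unfold bwd code; split_ifs <;> rfl
    have hM00 : M 0 0 = 0 := (hr 0 0).2 (by simp)
    have hσeq : fσ (bwd σ M) (hL.1 0) = σ := by
      apply Equiv.ext
      intro x
      by_cases hxl : x = Fin.last m
      · subst hxl
        rw [fσ_last_eq, hb, code_diag]
      · by_cases hx0 : x = 0
        · subst hx0
          rw [fσ_zero_eq, hb, code_last_right zero_ne_last, dn_zero, hM00,
            castSucc_zero']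
        · rw [fσ_apply_ne (hL.1 0) hx0 hxl, hb,
            code_ne_last (fun hc => hx0 hc.symm) zero_ne_last hxl, dn_zero]
          have : M 0 (dn x) = dn x := (hr 0 (dn x)).1 (by simp)
          rw [this, castSucc_dn hxl]
    refine Prod.ext ?_ (Subtype.ext ?_)
    · exact hσeq
    · dsimp only
      funext i j
      rw [fM_eq, hσeq]
      by_cases e : j = i
      · subst e
        rw [if_pos rfl, hb, code_last_right (Fin.castSucc_lt_last j).ne,
          dn_castSucc, Equiv.symm_apply_apply, dn_castSucc]
      · rw [if_neg e, hb, code_ne_last (fun hc => e (Fin.castSucc_injective m hc).symm)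
          (Fin.castSucc_lt_last i).ne (Fin.castSucc_lt_last j).ne,
          dn_castSucc, dn_castSucc, Equiv.symm_apply_apply, dn_castSucc]

end Main

theorem stmt10 {n : ℕ} (hn : Even n) :
    Nat.card {L : Fin n → Fin n → Fin n //
        IsLatin L ∧ IsSymmetric L ∧ IsUnipotent L} =
      n.factorial * Nat.card {L : Fin (n-1) → Fin (n-1) → Fin (n-1) //
        IsLatin L ∧ IsSymmetric L ∧ IsReducedLS L} := by
  rcases Nat.eq_zero_or_pos n with hz | hpos
  · subst hz
    haveI h1 : Subsingleton (Fin 0 → Fin 0 → Fin 0) := inferInstance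
    have e0 : (0 : ℕ) - 1 = 0 := rfl
    rw [e0]
    haveI i1 : Nonempty {L : Fin 0 → Fin 0 → Fin 0 // IsLatin L ∧ IsSymmetric L ∧ IsUnipotent L} :=
      ⟨⟨fun i => i.elim0, ⟨fun i => i.elim0, fun i => i.elim0⟩, fun i => i.elim0,
        fun i => i.elim0⟩⟩
    haveI i2 : Nonempty {L : Fin 0 → Fin 0 → Fin 0 // IsLatin L ∧ IsSymmetric L ∧ IsReducedLS L} :=
      ⟨⟨fun i => i.elim0, ⟨fun i => i.elim0, fun i => i.elim0⟩, fun i => i.elim0,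
        fun i => i.elim0⟩⟩
    haveI s1 : Subsingleton {L : Fin 0 → Fin 0 → Fin 0 // IsLatin L ∧ IsSymmetric L ∧ IsUnipotent L} :=
      ⟨fun a b => Subtype.ext (Subsingleton.elim _ _)⟩
    haveI s2 : Subsingleton {L : Fin 0 → Fin 0 → Fin 0 // IsLatin L ∧ IsSymmetric L ∧ IsReducedLS L} :=
      ⟨fun a b => Subtype.ext (Subsingleton.elim _ _)⟩
    rw [Nat.card_unique, Nat.card_unique, Nat.factorial_zero, one_mul]
  · obtain ⟨m, rfl⟩ : ∃ m, n = m + 1 := ⟨n - 1, (Nat.succ_pred_eq_of_pos hpos).symm⟩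
    have hm : Odd m := by
      have h := Nat.Even.sub_odd (by omega : 1 ≤ m + 1) hn odd_one
      exact h
    haveI : NeZero m := ⟨by rcases hm with ⟨k, hk⟩; omega⟩
    rw [Nat.card_congr (mainEquiv hm), Nat.card_prod, Nat.card_eq_fintype_card,
      Fintype.card_perm, Fintype.card_fin]
    rfl
end

section
/- Let L be a unipotent symmetric Latin square of order n > 2 that possesses an autotopism of the form (θ, θ⁻¹, ε) with θ ≠ ε. Then θ is a fixed-point-free involution (every cycle of θ has length 2) and n ≡ 0 (mod 4). -/
/-!
Since `L` is unipotent, `L(θ i, θ⁻¹ i) = L(i, i)` forces `θ⁻¹ i = θ i`, so `θ` is an involution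
and an automorphism of `L`; if it fixed a point it would fix a whole row, hence be trivial.
By symmetry the symbols `L(x, θ x)` are constant on the pairs `{x, θ x}`, so they take at most
`n / 2 < n - 1` values and some off-diagonal symbol `s` is missed. The positions of `s` give a
fixed-point-free involution `σ` commuting with `θ` and disjoint from it, so `⟨θ, σ⟩` is a Klein
four-group acting freely on the rows and `4 ∣ n`.
-/

open Finset Function

theorem dvd_card_of_partition_card_eq {α : Type*} [Fintype α] [DecidableEq α] {k : ℕ} (o : α → Finset α)
    (ho : ∀ x y, y ∈ o x ↔ o y = o x) (hk : ∀ x, #(o x) = k) : k ∣ Fintype.card α := by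
  have hfiber : ∀ S ∈ univ.image o, #{y ∈ univ | o y = S} = k := by
    intro S hS
    obtain ⟨x, -, rfl⟩ := mem_image.mp hS
    rw [← hk x]
    congr 1
    ext y
    simp [ho x y]
  rw [← card_univ, card_eq_sum_card_image o, sum_const_nat hfiber]
  exact dvd_mul_left k _

theorem four_dvd_card_of_commute_of_involutive {α : Type*} [Fintype α] {f g : α → α}
    (hf : Involutive f) (hg : Involutive g) (hfg : Function.Commute f g)
    (hf₀ : ∀ x, f x ≠ x) (hg₀ : ∀ x, g x ≠ x) (hfg₀ : ∀ x, g x ≠ f x) :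
    4 ∣ Fintype.card α := by
  classical
  refine dvd_card_of_partition_card_eq (fun x => {x, f x, g x, f (g x)}) (fun x y => ?_) (fun x => ?_)
  · constructor
    · simp only [mem_insert, mem_singleton]
      rintro (rfl | rfl | rfl | rfl) <;> ext z <;> simp only [mem_insert, mem_singleton, hf _,
        hg _, hfg _] <;> tauto
    · intro h
      exact h ▸ mem_insert_self y _
  · have hfgx : f (g x) ≠ x := fun h => hfg₀ x (by rw [← hf (g x), h])
    have hgx : f (g x) ≠ f x := fun h => hg₀ x (hf.injective h)
    rw [card_insert_of_notMem (by simp [(hf₀ x).symm, (hg₀ x).symm, hfgx.symm]),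
      card_insert_of_notMem (by simp [(hfg₀ x).symm, hgx.symm]),
      card_insert_of_notMem (by simpa using (hf₀ (g x)).symm), card_singleton]

theorem two_mul_card_image_le_of_invariant {α β : Type*} [Fintype α] [DecidableEq β]
    {f : α → α} {g : α → β} (hf₀ : ∀ x, f x ≠ x) (hg : ∀ x, g (f x) = g x) :
    2 * #(univ.image g) ≤ Fintype.card α := by
  refine mul_card_image_le_card univ 2 fun b hb => ?_
  obtain ⟨x, -, rfl⟩ := mem_image.mp hb
  exact one_lt_card.mpr ⟨x, by simp, f x, by simp [hg], (hf₀ x).symm⟩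

theorem IsSymmetric.exists_missing_symbol {n : ℕ} {L : Fin n → Fin n → Fin n}
    (hs : IsSymmetric L) (hn : 2 < n) {θ : Fin n → Fin n} (hθ : Involutive θ)
    (hθ₀ : ∀ x, θ x ≠ x) (c : Fin n) : ∃ s, s ≠ c ∧ ∀ i, L i (θ i) ≠ s := by
  have hg : ∀ x, L (θ x) (θ (θ x)) = L x (θ x) := fun x => by rw [hθ x, hs]
  have himage := two_mul_card_image_le_of_invariant (g := fun x => L x (θ x)) hθ₀ hg
  rw [Fintype.card_fin] at himage
  obtain ⟨s, hsc, hmiss⟩ := exists_mem_notMem_of_card_lt_card (s := univ.image fun x => L x (θ x))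
    (t := univ.erase c) (by rw [card_erase_of_mem (mem_univ c), card_univ, Fintype.card_fin]; omega)
  exact ⟨s, ne_of_mem_erase hsc, fun i hi => hmiss (mem_image.mpr ⟨i, mem_univ i, hi⟩)⟩

namespace IsLatin

variable {n : ℕ} {L : Fin n → Fin n → Fin n}

theorem row_injective (hL : IsLatin L) (i : Fin n) : Injective (L i) :=
  (hL.1 i).injective

noncomputable def col (hL : IsLatin L) (i s : Fin n) : Fin n :=
  (Equiv.ofBijective (L i) (hL.1 i)).symm s

theorem apply_col (hL : IsLatin L) (i s : Fin n) : L i (hL.col i s) = s :=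
  (Equiv.ofBijective (L i) (hL.1 i)).apply_symm_apply s

theorem col_eq_of_apply_eq (hL : IsLatin L) {i j s : Fin n} (h : L i j = s) : hL.col i s = j :=
  hL.row_injective i ((hL.apply_col i s).trans h.symm)

theorem col_involutive (hL : IsLatin L) (hs : IsSymmetric L) (s : Fin n) :
    Involutive fun i => hL.col i s :=
  fun i => hL.col_eq_of_apply_eq ((hs _ _).trans (hL.apply_col i s))

theorem col_ne_of_apply_ne (hL : IsLatin L) {i j s : Fin n} (h : L i j ≠ s) : hL.col i s ≠ j :=
  fun hc => h (hc ▸ hL.apply_col i s)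

theorem col_commute (hL : IsLatin L) {θ : Fin n → Fin n} (hθ : ∀ i j, L (θ i) (θ j) = L i j)
    (s : Fin n) : Function.Commute (fun i => hL.col i s) θ :=
  fun i => hL.col_eq_of_apply_eq ((hθ _ _).trans (hL.apply_col i s))

theorem involutive_of_autotopism (hL : IsLatin L) (hu : IsUnipotent L) {θ : Equiv.Perm (Fin n)}
    (haut : ∀ i j, L (θ i) (θ⁻¹ j) = L i j) : Involutive θ := by
  intro i
  have h : L (θ i) (θ⁻¹ i) = L (θ i) (θ i) := (haut i i).trans (hu i (θ i))
  simpa using (congrArg θ (hL.row_injective _ h)).symm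

theorem eq_one_of_apply_eq_self (hL : IsLatin L) {θ : Equiv.Perm (Fin n)}
    (hθ : ∀ i j, L (θ i) (θ j) = L i j) {x : Fin n} (hx : θ x = x) : θ = 1 :=
  Equiv.ext fun j => hL.row_injective x (by simpa [hx] using hθ x j)

end IsLatin

theorem stmt11 {n : ℕ} (hn : 2 < n) (L : Fin n → Fin n → Fin n)
    (hL : IsLatin L) (hs : IsSymmetric L) (hu : IsUnipotent L)
    (θ : Equiv.Perm (Fin n)) (hθ : θ ≠ 1)
    (haut : ∀ i j, L (θ i) (θ⁻¹ j) = L i j) :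
    (∀ x, θ x ≠ x) ∧ θ * θ = 1 ∧ n % 4 = 0 := by
  have hinv : Involutive θ := hL.involutive_of_autotopism hu haut
  have hθL : ∀ i j, L (θ i) (θ j) = L i j := fun i j => by
    simpa only [Equiv.Perm.inv_eq_iff_eq.mpr (hinv j).symm] using haut i j
  have hfree : ∀ x, θ x ≠ x := fun x hx => hθ (hL.eq_one_of_apply_eq_self hθL hx)
  refine ⟨hfree, Equiv.ext hinv, ?_⟩
  obtain ⟨s, hsc, hsθ⟩ := hs.exists_missing_symbol hn hinv hfree (L ⟨0, by omega⟩ ⟨0, by omega⟩)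
  have h4 : 4 ∣ Fintype.card (Fin n) :=
    four_dvd_card_of_commute_of_involutive hinv (hL.col_involutive hs s)
      (hL.col_commute hθL s).symm hfree
      (fun i => hL.col_ne_of_apply_ne fun h => hsc (h ▸ hu i _))
      (fun i => hL.col_ne_of_apply_ne (hsθ i))
  rwa [Fintype.card_fin, Nat.dvd_iff_mod_eq_zero] at h4
end

section
/- In a semisymmetric Latin square of order n, the number of idempotent elements is congruent to n² modulo 3. Consequently, if there exists an idempotent semisymmetric Latin square of order n then n ≢ 2 (mod 3), and if there exists a unipotent semisymmetric Latin square of order n then n ≢ 0 (mod 3). -/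
open MulAction in
theorem key13 {n : ℕ} (L : Fin n → Fin n → Fin n) (hs : IsSemisymmetric L) :
    Nat.card {i : Fin n // L i i = i} % 3 = n ^ 2 % 3 := by
  have key2 : ∀ a b : Fin n, L (L a b) a = b := by
    intro a b
    have h1 := hs b (L a b)
    rw [hs a b] at h1
    exact h1
  let σ : Equiv.Perm (Fin n × Fin n) :=
    { toFun := fun p => (p.2, L p.1 p.2)
      invFun := fun p => (L p.1 p.2, p.1)
      left_inv := fun p => by simp [hs p.1 p.2]
      right_inv := fun p => by simp [key2 p.1 p.2] }
  have hσapp : ∀ p : Fin n × Fin n, σ p = (p.2, L p.1 p.2) := fun p => rfl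
  have hσ3 : σ ^ 3 = 1 := by
    refine Equiv.ext fun p => ?_
    have : (σ ^ 3) p = σ (σ (σ p)) := by
      rw [pow_succ, pow_succ, pow_one, Equiv.Perm.mul_apply, Equiv.Perm.mul_apply]
    rw [this, hσapp, hσapp, hσapp]
    rw [hs p.1 p.2, key2 p.1 p.2]
    rfl
  have hPG : IsPGroup 3 (Subgroup.zpowers σ) := by
    intro g
    have hm' : ∃ m : ℤ, σ ^ m = (g : Equiv.Perm (Fin n × Fin n)) := g.2
    obtain ⟨m, hm⟩ := hm'
    have h1 : (g : Equiv.Perm (Fin n × Fin n)) ^ (3 : ℕ) = 1 := by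
      rw [← hm, ← zpow_natCast, ← zpow_mul, mul_comm, zpow_mul, zpow_natCast, hσ3, one_zpow]
    refine ⟨1, Subtype.ext ?_⟩
    rw [SubgroupClass.coe_pow]
    simpa using h1
  haveI : Fact (Nat.Prime 3) := ⟨by norm_num⟩
  have hmod := hPG.card_modEq_card_fixedPoints (Fin n × Fin n)
  have hcard1 : Nat.card (Fin n × Fin n) = n ^ 2 := by simp [sq]
  have hfix : Nat.card (fixedPoints (Subgroup.zpowers σ) (Fin n × Fin n))
      = Nat.card {i : Fin n // L i i = i} := by
    refine Nat.card_congr ?_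
    refine { toFun := fun p => ⟨p.1.1, ?_⟩, invFun := fun i => ⟨(i.1, i.1), ?_⟩,
             left_inv := ?_, right_inv := ?_ }
    · have h2 : σ p.1 = p.1 := p.2 ⟨σ, Subgroup.mem_zpowers σ⟩
      rw [hσapp] at h2
      have h4 : p.1.2 = p.1.1 := congrArg Prod.fst h2
      have h5 : L p.1.1 p.1.2 = p.1.2 := congrArg Prod.snd h2
      rw [h4] at h5
      exact h5
    · rintro ⟨g, hg⟩
      obtain ⟨m, hm⟩ : ∃ m : ℤ, σ ^ m = g := hg
      have hfix1 : σ (i.1, i.1) = (i.1, i.1) := by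
        rw [hσapp]
        simp [i.2]
      show g • ((i.1 : Fin n), (i.1 : Fin n)) = _
      rw [← hm]
      exact Equiv.Perm.zpow_apply_eq_self_of_apply_eq_self hfix1 m
    · rintro ⟨⟨a, b⟩, hp⟩
      have h2 : σ (a, b) = (a, b) := hp ⟨σ, Subgroup.mem_zpowers σ⟩
      rw [hσapp] at h2
      have h4 : b = a := congrArg Prod.fst h2
      subst h4
      rfl
    · intro i; rfl
  rw [← hfix]
  calc Nat.card (fixedPoints (Subgroup.zpowers σ) (Fin n × Fin n)) % 3
      = Nat.card (Fin n × Fin n) % 3 := hmod.symm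
    _ = n ^ 2 % 3 := by rw [hcard1]

theorem stmt13 {n : ℕ} (hn : 0 < n) :
    (∀ L : Fin n → Fin n → Fin n, IsLatin L → IsSemisymmetric L →
        Nat.card {i : Fin n // L i i = i} % 3 = n ^ 2 % 3) ∧
    ((∃ L : Fin n → Fin n → Fin n, IsLatin L ∧ IsSemisymmetric L ∧ IsIdempotent L) →
        n % 3 ≠ 2) ∧
    ((∃ L : Fin n → Fin n → Fin n, IsLatin L ∧ IsSemisymmetric L ∧ IsUnipotent L) →
        n % 3 ≠ 0) := by
  refine ⟨fun L hL hs => key13 L hs, ?_, ?_⟩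
  · rintro ⟨L, hL, hs, hid⟩ h2
    have hk := key13 L hs
    have hcard : Nat.card {i : Fin n // L i i = i} = n := by
      rw [Nat.card_congr (Equiv.subtypeUnivEquiv hid)]
      simp
    rw [hcard, Nat.pow_mod, h2] at hk
    omega
  · rintro ⟨L, hL, hs, hu⟩ h0
    have hk := key13 L hs
    set i0 : Fin n := ⟨0, hn⟩ with hi0
    set c : Fin n := L i0 i0 with hc
    have hic : ∀ i : Fin n, L i c = i := by
      intro i
      have := hs i i
      rw [hu i i0] at this
      exact this
    have hcc : L c c = c := hic c
    haveI : Unique {i : Fin n // L i i = i} := by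
      refine { default := ⟨c, hcc⟩, uniq := fun a => Subtype.ext ?_ }
      have h1 : L a.1 a.1 = c := hu a.1 i0
      rw [a.2] at h1
      exact h1
    rw [Nat.card_unique, Nat.pow_mod, h0] at hk
    omega
end

section
/- The number of unipotent semisymmetric Latin squares of order n is exactly n times the number of reduced semisymmetric Latin squares of order n. The same statement holds with 'semisymmetric' replaced by 'totally symmetric'. -/
namespace Stmt15Aux

/-- conjugation of a square by a permutation -/
def conjL {n : ℕ} (α : Equiv.Perm (Fin n)) (L : Fin n → Fin n → Fin n) :
    Fin n → Fin n → Fin n := fun i j => α.symm (L (α i) (α j))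

lemma conjL_conjL {n : ℕ} (α : Equiv.Perm (Fin n)) (hα : α.symm = α)
    (L : Fin n → Fin n → Fin n) : conjL α (conjL α L) = L := by
  have hinv : ∀ x, α (α x) = x := fun x => by
    nth_rewrite 1 [← hα]
    exact α.symm_apply_apply x
  funext i j
  simp only [conjL, hα]
  rw [hinv, hinv, hinv]

lemma conjL_latin {n : ℕ} (α : Equiv.Perm (Fin n)) {L : Fin n → Fin n → Fin n}
    (h : IsLatin L) : IsLatin (conjL α L) := by
  constructor
  · intro i
    have : (conjL α L i) = α.symm ∘ (L (α i)) ∘ α := rfl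
    rw [this]
    exact α.symm.bijective.comp ((h.1 (α i)).comp α.bijective)
  · intro j
    have : (fun i => conjL α L i j) = α.symm ∘ (fun i => L i (α j)) ∘ α := rfl
    rw [this]
    exact α.symm.bijective.comp ((h.2 (α j)).comp α.bijective)

lemma conjL_ss {n : ℕ} (α : Equiv.Perm (Fin n)) {L : Fin n → Fin n → Fin n}
    (h : IsSemisymmetric L) : IsSemisymmetric (conjL α L) := by
  intro i j
  simp [conjL, Equiv.apply_symm_apply, h (α i) (α j)]

lemma conjL_symm {n : ℕ} (α : Equiv.Perm (Fin n)) {L : Fin n → Fin n → Fin n}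
    (h : IsSymmetric L) : IsSymmetric (conjL α L) := by
  intro i j; simp [conjL, h (α i) (α j)]

lemma uni_row_col {n : ℕ} [NeZero n] {L : Fin n → Fin n → Fin n}
    (hss : IsSemisymmetric L) (hu : IsUnipotent L) :
    (∀ i, L i (L 0 0) = i) ∧ (∀ i, L (L 0 0) i = i) := by
  have h1 : ∀ i, L i (L 0 0) = i := fun i => by
    have := hss i i
    rwa [hu i 0] at this
  refine ⟨h1, fun i => ?_⟩
  have := hss i (L 0 0)
  rwa [h1 i] at this

lemma red_diag {n : ℕ} [NeZero n] {L : Fin n → Fin n → Fin n}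
    (hss : IsSemisymmetric L) (hr : IsReducedLS L) : ∀ i, L i i = 0 := by
  intro i
  have h0 : L 0 i = i := (hr 0 i).1 (Fin.val_zero n)
  have := hss 0 i
  rwa [h0] at this

/-- The key counting lemma, for any property `P` implying semisymmetry and
stable under conjugation. -/
lemma key {n : ℕ} [NeZero n] (P : (Fin n → Fin n → Fin n) → Prop)
    (hPss : ∀ L, P L → IsSemisymmetric L)
    (hPconj : ∀ (α : Equiv.Perm (Fin n)) L, P L → P (conjL α L)) :
    Nat.card {L : Fin n → Fin n → Fin n // P L ∧ IsUnipotent L} =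
      n * Nat.card {L : Fin n → Fin n → Fin n // P L ∧ IsReducedLS L} := by
  have e : {L : Fin n → Fin n → Fin n // P L ∧ IsUnipotent L} ≃
      Fin n × {L : Fin n → Fin n → Fin n // P L ∧ IsReducedLS L} := by
    refine
      { toFun := fun L => ⟨L.1 0 0, conjL (Equiv.swap 0 (L.1 0 0)) L.1, ?_, ?_⟩
        invFun := fun p => ⟨conjL (Equiv.swap 0 p.1) p.2.1, ?_, ?_⟩
        left_inv := ?_, right_inv := ?_ }
    · exact hPconj _ _ L.2.1
    · -- reduced
      obtain ⟨L, hP, hu⟩ := L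
      obtain ⟨hrow, hcol⟩ := uni_row_col (hPss L hP) hu
      intro i j
      set σ := Equiv.swap (0 : Fin n) (L 0 0) with hσ
      have hs : σ.symm = σ := Equiv.symm_swap _ _
      constructor
      · intro hi
        have hi' : i = 0 := by exact Fin.ext hi
        subst hi'
        simp only [conjL, hs]
        rw [Equiv.swap_apply_left, hcol, Equiv.swap_apply_self]
      · intro hj
        have hj' : j = 0 := by exact Fin.ext hj
        subst hj'
        simp only [conjL, hs]
        rw [Equiv.swap_apply_left, hrow, Equiv.swap_apply_self]
    · exact hPconj _ _ p.2.2.1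
    · -- unipotent
      obtain ⟨c, R, hP, hr⟩ := p
      have hd := red_diag (hPss R hP) hr
      intro i j
      simp only [conjL, Equiv.symm_swap, hd]
    · -- left inverse
      rintro ⟨L, hP, hu⟩
      have hrc := uni_row_col (hPss L hP) hu
      apply Subtype.ext
      exact conjL_conjL _ (Equiv.symm_swap _ _) L
    · -- right inverse
      rintro ⟨c, R, hP, hr⟩
      have hd := red_diag (hPss R hP) hr
      have hval : conjL (Equiv.swap 0 c) R 0 0 = c := by
        simp only [conjL, Equiv.symm_swap]
        rw [Equiv.swap_apply_left, hd, Equiv.swap_apply_left]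
      refine Prod.ext ?_ ?_
      · exact hval
      · apply Subtype.ext
        simp only
        rw [hval]
        exact conjL_conjL _ (Equiv.symm_swap _ _) R
  rw [Nat.card_congr e, Nat.card_prod, Nat.card_eq_fintype_card, Fintype.card_fin]

end Stmt15Aux


theorem stmt15 {n : ℕ} (hn : 0 < n) :
    Nat.card {L : Fin n → Fin n → Fin n //
        IsLatin L ∧ IsSemisymmetric L ∧ IsUnipotent L} =
      n * Nat.card {L : Fin n → Fin n → Fin n //
        IsLatin L ∧ IsSemisymmetric L ∧ IsReducedLS L} ∧
    Nat.card {L : Fin n → Fin n → Fin n //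
        IsLatin L ∧ IsTotallySymmetric L ∧ IsUnipotent L} =
      n * Nat.card {L : Fin n → Fin n → Fin n //
        IsLatin L ∧ IsTotallySymmetric L ∧ IsReducedLS L} := by
  haveI : NeZero n := ⟨hn.ne'⟩
  constructor
  · have h := Stmt15Aux.key (fun L : Fin n → Fin n → Fin n => IsLatin L ∧ IsSemisymmetric L)
      (fun L hL => hL.2)
      (fun α L hL => ⟨Stmt15Aux.conjL_latin α hL.1, Stmt15Aux.conjL_ss α hL.2⟩)
    have eu : Nat.card {L : Fin n → Fin n → Fin n //
          IsLatin L ∧ IsSemisymmetric L ∧ IsUnipotent L} =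
        Nat.card {L : Fin n → Fin n → Fin n //
          (IsLatin L ∧ IsSemisymmetric L) ∧ IsUnipotent L} :=
      Nat.card_congr (Equiv.subtypeEquivRight fun L => and_assoc.symm)
    have er : Nat.card {L : Fin n → Fin n → Fin n //
          IsLatin L ∧ IsSemisymmetric L ∧ IsReducedLS L} =
        Nat.card {L : Fin n → Fin n → Fin n //
          (IsLatin L ∧ IsSemisymmetric L) ∧ IsReducedLS L} :=
      Nat.card_congr (Equiv.subtypeEquivRight fun L => and_assoc.symm)
    rw [eu, er]
    exact h
  · have h := Stmt15Aux.key (fun L : Fin n → Fin n → Fin n => IsLatin L ∧ IsTotallySymmetric L)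
      (fun L hL => hL.2.2)
      (fun α L hL => ⟨Stmt15Aux.conjL_latin α hL.1,
        Stmt15Aux.conjL_symm α hL.2.1, Stmt15Aux.conjL_ss α hL.2.2⟩)
    have eu : Nat.card {L : Fin n → Fin n → Fin n //
          IsLatin L ∧ IsTotallySymmetric L ∧ IsUnipotent L} =
        Nat.card {L : Fin n → Fin n → Fin n //
          (IsLatin L ∧ IsTotallySymmetric L) ∧ IsUnipotent L} :=
      Nat.card_congr (Equiv.subtypeEquivRight fun L => and_assoc.symm)
    have er : Nat.card {L : Fin n → Fin n → Fin n //
          IsLatin L ∧ IsTotallySymmetric L ∧ IsReducedLS L} =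
        Nat.card {L : Fin n → Fin n → Fin n //
          (IsLatin L ∧ IsTotallySymmetric L) ∧ IsReducedLS L} :=
      Nat.card_congr (Equiv.subtypeEquivRight fun L => and_assoc.symm)
    rw [eu, er]
    exact h
end

section
/- Let L be a symmetric Latin square of order n and let P be its group of principal autotopisms. Then: (a) every (α,β,ε) ∈ P satisfies β = α⁻¹; (b) P is abelian (any two principal autotopisms of L commute); and (c) for every (α,β,ε) ∈ P, the order of the permutation α divides n. -/
/-- `(α, β, ε)` is a principal autotopism of `L`. -/
def IsPrincipalAutotopism {n : ℕ} (L : Fin n → Fin n → Fin n)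
    (α β : Equiv.Perm (Fin n)) : Prop :=
  ∀ i j, L (α i) (β j) = L i j

/-!
If `(α, β, ε)` is a principal autotopism of a symmetric Latin square `L`, then
`L(αi, i) = L(i, β⁻¹i) = L(β⁻¹i, i)`, so `α = β⁻¹` by column injectivity. Principal autotopisms
are closed under products, so `α'⁻¹α⁻¹ = (αα')⁻¹` and `α, α'` commute. If `α` fixes a point `i`,
then `L(i, βj) = L(i, j)` forces `β = ε`, hence `α = ε`: every nontrivial power of `α` is
fixed-point-free, so `⟨α⟩` acts freely on the `n` symbols and `|⟨α⟩| = orderOf α` divides `n`.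
-/

theorem Equiv.Perm.orderOf_dvd_card_of_pow_apply_eq_self {α : Type*} [Fintype α]
    {σ : Equiv.Perm α} (h : ∀ (k : ℕ) (x : α), (σ ^ k) x = x → σ ^ k = 1) :
    orderOf σ ∣ Fintype.card α := by
  have hfree : ∀ x : α, MulAction.stabilizer (Subgroup.zpowers σ) x = ⊥ := by
    intro x
    rw [eq_bot_iff]
    rintro ⟨g, hg⟩ hgx
    obtain ⟨k, rfl⟩ := mem_powers_iff_mem_zpowers.mpr hg
    exact Subtype.ext (h k x hgx)
  have hcard := Nat.card_congr (MulAction.selfEquivOrbitsQuotientProd hfree)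
  rw [Nat.card_prod, Nat.card_zpowers, Nat.card_eq_fintype_card] at hcard
  exact Dvd.intro_left _ hcard.symm

namespace IsPrincipalAutotopism

variable {n : ℕ} {L : Fin n → Fin n → Fin n} {α β α' β' : Equiv.Perm (Fin n)}

theorem mul (h : IsPrincipalAutotopism L α β) (h' : IsPrincipalAutotopism L α' β') :
    IsPrincipalAutotopism L (α * α') (β * β') := fun i j => by
  rw [Equiv.Perm.mul_apply, Equiv.Perm.mul_apply, h, h']

theorem pow (h : IsPrincipalAutotopism L α β) (k : ℕ) :
    IsPrincipalAutotopism L (α ^ k) (β ^ k) := by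
  induction k with
  | zero => exact fun i j => rfl
  | succ k ih => simpa only [pow_succ] using ih.mul h

theorem apply_left (h : IsPrincipalAutotopism L α β) (i j : Fin n) :
    L (α i) j = L i (β⁻¹ j) := by
  simpa only [Equiv.Perm.coe_inv, Equiv.apply_symm_apply] using h i (β⁻¹ j)

theorem eq_inv_of_isSymmetric (hcol : ∀ j, Function.Injective fun i => L i j)
    (hs : IsSymmetric L) (h : IsPrincipalAutotopism L α β) : β = α⁻¹ := by
  refine inv_eq_iff_eq_inv.mp (Equiv.ext fun i => hcol i ?_)
  change L (β⁻¹ i) i = L (α i) i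
  rw [hs, ← h.apply_left]

theorem right_eq_one_of_apply_eq_self (hrow : ∀ i, Function.Injective (L i))
    (h : IsPrincipalAutotopism L α β) {i : Fin n} (hi : α i = i) : β = 1 :=
  Equiv.ext fun j => hrow i (by simpa only [hi, Equiv.Perm.one_apply] using h i j)

theorem commute_of_isSymmetric (hcol : ∀ j, Function.Injective fun i => L i j)
    (hs : IsSymmetric L) (h : IsPrincipalAutotopism L α β)
    (h' : IsPrincipalAutotopism L α' β') : Commute α α' := by
  have hprod := (h.mul h').eq_inv_of_isSymmetric hcol hs
  rw [h.eq_inv_of_isSymmetric hcol hs, h'.eq_inv_of_isSymmetric hcol hs, ← mul_inv_rev] at hprod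
  exact (inv_injective hprod).symm

theorem eq_one_of_isSymmetric_of_apply_eq_self (hrow : ∀ i, Function.Injective (L i))
    (hcol : ∀ j, Function.Injective fun i => L i j) (hs : IsSymmetric L)
    (h : IsPrincipalAutotopism L α β) {i : Fin n} (hi : α i = i) : α = 1 := by
  have hβ := h.right_eq_one_of_apply_eq_self hrow hi
  rwa [h.eq_inv_of_isSymmetric hcol hs, inv_eq_one] at hβ

end IsPrincipalAutotopism

theorem stmt17 {n : ℕ} (L : Fin n → Fin n → Fin n)
    (hL : IsLatin L) (hs : IsSymmetric L) :
    (∀ α β : Equiv.Perm (Fin n), IsPrincipalAutotopism L α β → β = α⁻¹) ∧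
    (∀ α β α' β' : Equiv.Perm (Fin n), IsPrincipalAutotopism L α β →
        IsPrincipalAutotopism L α' β' → α * α' = α' * α ∧ β * β' = β' * β) ∧
    (∀ α β : Equiv.Perm (Fin n), IsPrincipalAutotopism L α β → orderOf α ∣ n) := by
  have hrow : ∀ i, Function.Injective (L i) := fun i => (hL.1 i).injective
  have hcol : ∀ j, Function.Injective fun i => L i j := fun j => (hL.2 j).injective
  refine ⟨fun α β h => h.eq_inv_of_isSymmetric hcol hs, fun α β α' β' h h' => ?_,
    fun α β h => ?_⟩
  · have hα : Commute α α' := h.commute_of_isSymmetric hcol hs h'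
    rw [h.eq_inv_of_isSymmetric hcol hs, h'.eq_inv_of_isSymmetric hcol hs]
    exact ⟨hα.eq, hα.inv_inv.eq⟩
  · simpa only [Fintype.card_fin] using Equiv.Perm.orderOf_dvd_card_of_pow_apply_eq_self
      fun k i hi => (h.pow k).eq_one_of_isSymmetric_of_apply_eq_self hrow hcol hs hi
end

section
/- Suppose A and B are totally symmetric Latin squares of order n with n not divisible by 3. If A and B are paratopic, then A and B are isomorphic. -/
/-!
For totally symmetric squares every conjugate is the square itself, so paratopy is isotopy, and
an isotopism `(α, β, γ)` from `A` to `B` remains one after any permutation of its components.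
Comparing these six isotopisms shows that `a = α⁻¹ β` and `b = β⁻¹ γ` are commuting row twists of
`A`, i.e. `(p, 1, p⁻¹)` is an autotopism of `A`. A row twist with a fixed point is trivial, so for
`3 ∤ n` no row twist has order `3`; hence `a² b` has a cube root `x` among its powers, `(x, a⁻¹ x,
(a b)⁻¹ x)` is an autotopism of `A`, and composing it with `(α, β, γ)` gives the isomorphism `α x`.
-/

open Equiv

section Isotopism

variable {α : Type*}

def IsIsotopism (A B : α → α → α) (θ : Perm α × Perm α × Perm α) : Prop :=
  ∀ i j, B (θ.1 i) (θ.2.1 j) = θ.2.2 (A i j)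

variable {A B C : α → α → α} {θ φ : Perm α × Perm α × Perm α}

theorem IsIsotopism.mul (hθ : IsIsotopism A B θ) (hφ : IsIsotopism B C φ) :
    IsIsotopism A C (φ * θ) := fun i j =>
  (hφ _ _).trans (congrArg φ.2.2 (hθ i j))

theorem IsIsotopism.inv (hθ : IsIsotopism A B θ) : IsIsotopism B A θ⁻¹ := fun i j => by
  obtain ⟨i, rfl⟩ := θ.1.surjective i
  obtain ⟨j, rfl⟩ := θ.2.1.surjective j
  simp [hθ i j]

def autotopismGroup (A : α → α → α) : Subgroup (Perm α × Perm α × Perm α) where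
  carrier := {θ | IsIsotopism A A θ}
  one_mem' _ _ := rfl
  mul_mem' hθ hφ := hφ.mul hθ
  inv_mem' := IsIsotopism.inv

theorem IsIsotopism.inv_mul_mem_autotopismGroup {p q r p' q' r' : Perm α}
    (h : IsIsotopism A B (p, q, r)) (h' : IsIsotopism A B (p', q', r')) :
    (p⁻¹ * p', q⁻¹ * q', r⁻¹ * r') ∈ autotopismGroup A :=
  h'.mul h.inv

def IsRowTwist (A : α → α → α) (p : Perm α) : Prop :=
  (p, 1, p⁻¹) ∈ autotopismGroup A

variable {p q : Perm α}

theorem IsRowTwist.inv (hp : IsRowTwist A p) : IsRowTwist A p⁻¹ := by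
  simpa [IsRowTwist] using inv_mem hp

theorem IsRowTwist.pow (hp : IsRowTwist A p) (k : ℕ) : IsRowTwist A (p ^ k) := by
  simpa [IsRowTwist] using pow_mem hp k

theorem IsRowTwist.mul (hp : IsRowTwist A p) (hq : IsRowTwist A q) (hpq : Commute p q) :
    IsRowTwist A (p * q) := by
  have := mul_mem hp hq
  rwa [Prod.mk_mul_mk, Prod.mk_mul_mk, one_mul, ← mul_inv_rev, ← hpq.eq] at this

end Isotopism

section TotallySymmetric

variable {n : ℕ} {A B : Fin n → Fin n → Fin n}

theorem IsTotallySymmetric.apply_apply_left (hA : IsTotallySymmetric A) (i j : Fin n) :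
    A i (A i j) = j := by
  rw [hA.1 i j]
  exact hA.2 j i

theorem IsTotallySymmetric.apply_apply_right (hA : IsTotallySymmetric A) (i j : Fin n) :
    A (A i j) j = i := by
  rw [hA.1]
  exact hA.2 i j

theorem IsTotallySymmetric.eq_of_isConjugate (hA : IsTotallySymmetric A)
    {C : Fin n → Fin n → Fin n} (hC : IsConjugate A C) : C = A := by
  funext i j
  rcases hC with h | h | h | h | h | h
  · exact h i j
  · rw [h j i, hA.1]
  · simpa only [hA.apply_apply_right] using h (A i j) j
  · simpa only [hA.apply_apply_left] using h i (A i j)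
  · simpa only [hA.1 (A i j) i, hA.apply_apply_left] using h (A i j) i
  · rw [← hA.1 j i]
    simpa only [hA.apply_apply_left] using h j (A j i)

variable {p q r : Perm (Fin n)}

theorem IsIsotopism.rotate (hA : IsTotallySymmetric A) (hB : IsTotallySymmetric B)
    (h : IsIsotopism A B (p, q, r)) : IsIsotopism A B (q, r, p) := fun i j => by
  have hj : r j = B (p (A i j)) (q i) := by
    rw [h, hA.1 (A i j) i, hA.apply_apply_left]
  rw [hj]
  exact hB.2 _ _

theorem IsIsotopism.swap (hA : IsTotallySymmetric A) (hB : IsTotallySymmetric B)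
    (h : IsIsotopism A B (p, q, r)) : IsIsotopism A B (q, p, r) := fun i j => by
  rw [hB.1]
  exact (h j i).trans (congrArg r (hA.1 j i))

theorem IsTotallySymmetric.eq_of_mem_autotopismGroup (hA : IsTotallySymmetric A)
    {r' : Perm (Fin n)} (h : (p, q, r) ∈ autotopismGroup A)
    (h' : (p, q, r') ∈ autotopismGroup A) : r = r' := by
  refine Perm.ext fun k => ?_
  rw [← hA.apply_apply_left k k, ← h, ← h']

theorem IsRowTwist.mk_mem_autotopismGroup (hA : IsTotallySymmetric A) (hp : IsRowTwist A p)
    (hq : IsRowTwist A q) (hpq : Commute p q) : (p, q, (p * q)⁻¹) ∈ autotopismGroup A := by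
  have hq' : (1, q, q⁻¹) ∈ autotopismGroup A := IsIsotopism.swap hA hA hq
  have := mul_mem hp hq'
  rwa [Prod.mk_mul_mk, Prod.mk_mul_mk, mul_one, one_mul, ← mul_inv_rev, ← hpq.eq] at this

theorem IsRowTwist.eq_one_of_apply_eq (hA : IsTotallySymmetric A) (hp : IsRowTwist A p)
    {x : Fin n} (hx : p x = x) : p = 1 := by
  rw [← inv_eq_one]
  refine Perm.ext fun k => ?_
  have := hp x (A x k)
  simp only [hx, Perm.one_apply, hA.apply_apply_left] at this
  exact this.symm

theorem IsRowTwist.eq_one_of_pow_three (hn : ¬ 3 ∣ n) (hA : IsTotallySymmetric A)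
    (hp : IsRowTwist A p) (h3 : p ^ 3 = 1) : p = 1 := by
  have : Fact (Nat.Prime 3) := ⟨Nat.prime_three⟩
  obtain ⟨x, hx⟩ := Perm.exists_fixed_point_of_prime (p := 3) (n := 1)
    (by rwa [Fintype.card_fin]) (by rwa [pow_one])
  exact hp.eq_one_of_apply_eq hA hx

theorem IsRowTwist.coprime_three_orderOf (hn : ¬ 3 ∣ n) (hA : IsTotallySymmetric A)
    (hp : IsRowTwist A p) : Nat.Coprime 3 (orderOf p) := by
  rw [Nat.Prime.coprime_iff_not_dvd Nat.prime_three]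
  intro h3
  have hord := orderOf_pow_orderOf_div (orderOf_pos p).ne' h3
  have hone := (hp.pow _).eq_one_of_pow_three hn hA (by rw [← hord]; exact pow_orderOf_eq_one _)
  rw [hone, orderOf_one] at hord
  omega

theorem IsRowTwist.exists_pow_pow_three_eq (hn : ¬ 3 ∣ n) (hA : IsTotallySymmetric A)
    (hp : IsRowTwist A p) : ∃ m : ℕ, (p ^ m) ^ 3 = p := by
  obtain ⟨m, hm⟩ := exists_pow_eq_self_of_coprime (hp.coprime_three_orderOf hn hA)
  exact ⟨m, by rwa [← pow_mul, mul_comm, pow_mul]⟩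

theorem IsIsotopism.isRowTwist_and_commute (hA : IsTotallySymmetric A)
    (hB : IsTotallySymmetric B) {α a b : Perm (Fin n)}
    (h : IsIsotopism A B (α, α * a, α * a * b)) :
    IsRowTwist A a ∧ IsRowTwist A b ∧ Commute a b := by
  have hab : (a, b, (a * b)⁻¹) ∈ autotopismGroup A := by
    simpa [mul_assoc] using h.inv_mul_mem_autotopismGroup (h.rotate hA hB)
  have ha : IsRowTwist A a := by
    have h' : (a, a⁻¹, 1) ∈ autotopismGroup A := by
      simpa [mul_assoc] using h.inv_mul_mem_autotopismGroup (h.swap hA hB)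
    simpa using IsRowTwist.inv (IsIsotopism.rotate hA hA h' : IsRowTwist A a⁻¹)
  have hb : (1, b, b⁻¹) ∈ autotopismGroup A := by
    simpa [mul_assoc] using
      h.inv_mul_mem_autotopismGroup (((h.rotate hA hB).rotate hA hB).swap hA hB)
  refine ⟨ha, IsIsotopism.swap hA hA hb, ?_⟩
  have hconj := hA.eq_of_mem_autotopismGroup ha (by simpa using mul_mem hab (inv_mem hb))
  have hba : Commute b a⁻¹ := by
    change b * a⁻¹ = a⁻¹ * b
    conv_lhs => rw [hconj]
    group
  exact (Commute.inv_right_iff.mp hba).symm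

theorem IsRowTwist.exists_mk_mem_autotopismGroup (hn : ¬ 3 ∣ n)
    (hA : IsTotallySymmetric A) {a b : Perm (Fin n)}
    (ha : IsRowTwist A a) (hb : IsRowTwist A b) (hab : Commute a b) :
    ∃ x, (x, a⁻¹ * x, (a * b)⁻¹ * x) ∈ autotopismGroup A := by
  have hw : IsRowTwist A (a * a * b) := (ha.mul ha (Commute.refl a)).mul hb (hab.mul_left hab)
  obtain ⟨m, hm⟩ := hw.exists_pow_pow_three_eq hn hA
  set x := (a * a * b) ^ m
  have hax : Commute a x :=
    (((Commute.refl a).mul_right (Commute.refl a)).mul_right hab).pow_right m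
  have hx : IsRowTwist A x := hw.pow m
  have hcube : a * b = x * (x * (x * a⁻¹)) :=
    calc a * b = a * (b * a) * a⁻¹ := by group
      _ = x ^ 3 * a⁻¹ := by rw [hm, ← hab.eq, mul_assoc a a b]
      _ = x * (x * (x * a⁻¹)) := by simp only [pow_succ, pow_zero, one_mul, mul_assoc]
  have hcorr : (x * (a⁻¹ * x))⁻¹ = (a * b)⁻¹ * x := by
    rw [hax.inv_left.eq, hcube]
    group
  refine ⟨x, ?_⟩
  rw [← hcorr]
  exact hx.mk_mem_autotopismGroup hA (ha.inv.mul hx hax.inv_left)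
    (hax.inv_left.symm.mul_right (Commute.refl x))

theorem isomorphic_of_isIsotopism (hn : ¬ 3 ∣ n)
    (hA : IsTotallySymmetric A) (hB : IsTotallySymmetric B) {α β γ : Perm (Fin n)}
    (h : IsIsotopism A B (α, β, γ)) : Isomorphic A B := by
  obtain ⟨a, rfl⟩ : ∃ a, β = α * a := ⟨α⁻¹ * β, by group⟩
  obtain ⟨b, rfl⟩ : ∃ b, γ = α * a * b := ⟨(α * a)⁻¹ * γ, by group⟩
  obtain ⟨ha, hb, hab⟩ := h.isRowTwist_and_commute hA hB
  obtain ⟨x, hx⟩ := ha.exists_mk_mem_autotopismGroup hn hA hb hab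
  have hiso : IsIsotopism A B (α * x, α * x, α * x) := by
    convert hx.mul h using 1
    simp only [Prod.mk_mul_mk, Prod.mk.injEq, true_and]
    constructor <;> group
  exact ⟨α * x, hiso⟩

end TotallySymmetric

theorem stmt18_general {n : ℕ} (hn : ¬ (3 ∣ n)) (A B : Fin n → Fin n → Fin n)
    (hAts : IsTotallySymmetric A)
    (hBts : IsTotallySymmetric B)
    (hpar : Paratopic A B) : Isomorphic A B := by
  obtain ⟨C, hC, α, β, γ, h⟩ := hpar
  rw [hAts.eq_of_isConjugate hC] at h
  exact isomorphic_of_isIsotopism hn hAts hBts h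

theorem stmt18 {n : ℕ} (hn : ¬ (3 ∣ n)) (A B : Fin n → Fin n → Fin n)
    (hA : IsLatin A) (hAts : IsTotallySymmetric A)
    (hB : IsLatin B) (hBts : IsTotallySymmetric B)
    (hpar : Paratopic A B) : Isomorphic A B :=
  stmt18_general hn A B hAts hBts hpar
end

section
/- Let n ≥ 3 with n ≡ 0 (mod 3), and define Latin squares A and B on the symbol set Z_n by A(i,j) ≡ −i−j (mod n) and B(i,j) ≡ 1−i−j (mod n). Then A and B are totally symmetric Latin squares that are isotopic but not isomorphic; in particular, A has exactly 3 idempotent elements while B has none. Hence for every order n ≡ 0 (mod 3) there exist isotopic totally symmetric Latin squares that are not isomorphic. -/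
/-- A Latin square on symbol set `S`. -/
def IsLatinOn {S : Type*} (L : S → S → S) : Prop :=
  (∀ i, Function.Bijective (L i)) ∧ (∀ j, Function.Bijective fun i => L i j)

/-- Symmetric: `L(i,j) = L(j,i)`. -/
def IsSymmetricOn {S : Type*} (L : S → S → S) : Prop :=
  ∀ i j, L i j = L j i

/-- Semisymmetric: `L(i,j) = k → L(j,k) = i`. -/
def IsSemisymmetricOn {S : Type*} (L : S → S → S) : Prop :=
  ∀ i j, L j (L i j) = i

/-- Totally symmetric: symmetric and semisymmetric. -/
def IsTotallySymmetricOn {S : Type*} (L : S → S → S) : Prop :=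
  IsSymmetricOn L ∧ IsSemisymmetricOn L

/-- `B` is isotopic to `A`: `B = A(α,β,γ)`. -/
def IsotopicOn {S : Type*} (A B : S → S → S) : Prop :=
  ∃ α β γ : Equiv.Perm S, ∀ i j, B (α i) (β j) = γ (A i j)

/-- `B` is isomorphic to `A`: `B = A(α,α,α)`. -/
def IsomorphicOn {S : Type*} (A B : S → S → S) : Prop :=
  ∃ α : Equiv.Perm S, ∀ i j, B (α i) (α j) = α (A i j)

theorem stmt19 (n : ℕ) (hn : 3 ≤ n) (h3 : 3 ∣ n) :
    IsLatinOn (fun i j : ZMod n => -i - j) ∧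
    IsLatinOn (fun i j : ZMod n => 1 - i - j) ∧
    IsTotallySymmetricOn (fun i j : ZMod n => -i - j) ∧
    IsTotallySymmetricOn (fun i j : ZMod n => 1 - i - j) ∧
    IsotopicOn (fun i j : ZMod n => -i - j) (fun i j : ZMod n => 1 - i - j) ∧
    ¬ IsomorphicOn (fun i j : ZMod n => -i - j) (fun i j : ZMod n => 1 - i - j) ∧
    Nat.card {i : ZMod n // -i - i = i} = 3 ∧
    (∀ i : ZMod n, 1 - i - i ≠ i) := by
  haveI : NeZero n := ⟨by omega⟩
  obtain ⟨m, hm⟩ := h3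
  have hm1 : 1 ≤ m := by omega
  have hB : ∀ i : ZMod n, 1 - i - i ≠ i := by
    intro i h
    have h1 : (3 : ZMod n) * i = 1 := by linear_combination -h
    have h2 := congrArg (ZMod.castHom ⟨m, hm⟩ (ZMod 3)) h1
    simp only [map_mul, map_one, map_ofNat] at h2
    rw [show ((3 : ZMod 3)) = 0 by decide, zero_mul] at h2
    exact absurd h2 (by decide)
  refine ⟨⟨?_, ?_⟩, ⟨?_, ?_⟩, ⟨?_, ?_⟩, ⟨?_, ?_⟩, ?_, ?_, ?_, hB⟩
  · intro i
    exact Function.Involutive.bijective (fun j => by ring)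
  · intro j
    exact Function.Involutive.bijective (fun i => by ring)
  · intro i
    exact Function.Involutive.bijective (fun j => by ring)
  · intro j
    exact Function.Involutive.bijective (fun i => by ring)
  · intro i j; ring
  · intro i j; ring
  · intro i j; ring
  · intro i j; ring
  · exact ⟨1, 1, Equiv.addLeft 1, fun i j => by
      simp only [Equiv.Perm.coe_one, id_eq, Equiv.coe_addLeft]; ring⟩
  · rintro ⟨α, hα⟩
    have h0 := hα 0 0
    simp only [neg_zero, sub_zero, zero_sub, neg_neg] at h0
    exact hB (α 0) h0
  · have hiff : ∀ i : ZMod n, (-i - i = i) ↔ (3 * i = 0) := by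
      intro i; constructor <;> intro h <;> linear_combination -h
    have e0 : {i : ZMod n // -i - i = i} ≃ {i : ZMod n // 3 * i = 0} :=
      Equiv.subtypeEquivRight hiff
    have hmem : ∀ k : Fin 3, (3 : ZMod n) * ((k.val * m : ℕ) : ZMod n) = 0 := by
      intro k
      have h1 : (3 * (k.val * m) : ℕ) = k.val * n := by rw [hm]; ring
      calc (3 : ZMod n) * ((k.val * m : ℕ) : ZMod n)
          = ((3 * (k.val * m) : ℕ) : ZMod n) := by push_cast; ring
        _ = ((k.val * n : ℕ) : ZMod n) := by rw [h1]
        _ = 0 := by push_cast; simp [ZMod.natCast_self]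
    have hlt' : ∀ k : Fin 3, k.val * m < n := by
      intro k
      have h1 : k.val * m ≤ 2 * m := Nat.mul_le_mul_right m (by omega)
      omega
    have hbij : Function.Bijective
        (fun k : Fin 3 => (⟨((k.val * m : ℕ) : ZMod n), hmem k⟩ :
          {i : ZMod n // 3 * i = 0})) := by
      constructor
      · intro k k' hkk
        have h2 : (((k.val * m : ℕ) : ZMod n)) = (((k'.val * m : ℕ) : ZMod n)) :=
          congrArg Subtype.val hkk
        have hval := congrArg ZMod.val h2
        rw [ZMod.val_natCast_of_lt (hlt' k), ZMod.val_natCast_of_lt (hlt' k')] at hval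
        have : k.val = k'.val := Nat.eq_of_mul_eq_mul_right hm1 hval
        exact Fin.ext this
      · rintro ⟨i, hi⟩
        have h2 : ((3 * i.val : ℕ) : ZMod n) = 0 := by
          push_cast
          rw [ZMod.natCast_val, ZMod.cast_id]
          exact hi
        have h3' : n ∣ 3 * i.val := by
          rwa [ZMod.natCast_eq_zero_iff] at h2
        obtain ⟨c, hc⟩ := h3'
        have hc' : 3 * i.val = 3 * (m * c) := by rw [hc, hm]; ring
        have hmc : i.val = m * c := by omega
        have hlt : i.val < n := ZMod.val_lt i
        have hd3 : c < 3 := by nlinarith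
        refine ⟨⟨c, hd3⟩, ?_⟩
        apply Subtype.ext
        show ((c * m : ℕ) : ZMod n) = i
        rw [Nat.mul_comm c m, ← hmc]
        rw [ZMod.natCast_val, ZMod.cast_id]
    have h4 := Nat.card_eq_of_bijective _ hbij
    rw [Nat.card_congr e0, ← h4]
    simp
end
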